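/- arXiv:1701.00720 — 2 statements merged into one kernel-verified Lean document; each statement's English description precedes it below -/
import Mathlib

section
/- There is a universal constant C such that the following holds. Let (p_i)_{i≥1} be a nonincreasing sequence of nonnegative reals with Σ_i p_i = 1, let D ≥ 1 be an integer, and let c ≥ 0. Suppose that for every integer k ≥ 1, Σ_{i > ⌈D·e^{c√k}⌉} p_i ≤ e^{-2k}. Then for every α ∈ (0,1), (1-α)^{-1} log Σ_i p_i^α ≤ log D + c²/α + C/(α(1-α)). -/
open Real Finset

lemma sum_rpow_le_card_rpow_mul (s : Finset ℕ) (f : ℕ → ℝ) (hf : ∀ i ∈ s, 0 ≤ f i)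
    {α : ℝ} (hα : 0 < α) (hα1 : α ≤ 1) :
    ∑ i ∈ s, f i ^ α ≤ (s.card : ℝ) ^ (1 - α) * (∑ i ∈ s, f i) ^ α := by
  rcases s.eq_empty_or_nonempty with rfl | hs
  · simp [Real.zero_rpow hα.ne']
  have hn : (0:ℝ) < s.card := by exact_mod_cast Finset.card_pos.2 hs
  have hw : ∀ i ∈ s, (0:ℝ) ≤ (s.card : ℝ)⁻¹ := fun i _ => by positivity
  have hw' : ∑ _i ∈ s, (s.card : ℝ)⁻¹ = 1 := by
    rw [Finset.sum_const, nsmul_eq_mul]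
    field_simp
  have hz : ∀ i ∈ s, (0:ℝ) ≤ f i ^ α := fun i hi => Real.rpow_nonneg (hf i hi) α
  have hp : (1:ℝ) ≤ α⁻¹ := by
    rw [le_inv_comm₀] <;> simp [hα, hα1]
  have key := Real.arith_mean_le_rpow_mean s (fun _ => (s.card : ℝ)⁻¹) (fun i => f i ^ α)
    hw hw' hz hp
  have h1 : ∑ i ∈ s, (s.card : ℝ)⁻¹ * (f i ^ α) ^ α⁻¹ = (s.card : ℝ)⁻¹ * ∑ i ∈ s, f i := by
    rw [← Finset.mul_sum]
    congr 1
    refine Finset.sum_congr rfl fun i hi => ?_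
    rw [← Real.rpow_mul (hf i hi), mul_inv_cancel₀ hα.ne', Real.rpow_one]
  rw [h1, ← Finset.mul_sum, one_div, inv_inv] at key
  have hsum : (0:ℝ) ≤ ∑ i ∈ s, f i := Finset.sum_nonneg hf
  have h2 : ((s.card : ℝ)⁻¹ * ∑ i ∈ s, f i) ^ α
      = (s.card : ℝ)⁻¹ ^ α * (∑ i ∈ s, f i) ^ α :=
    Real.mul_rpow (by positivity) hsum
  rw [h2] at key
  have key2 := mul_le_mul_of_nonneg_left key hn.le
  rw [← mul_assoc, ← mul_assoc, mul_inv_cancel₀ hn.ne', one_mul] at key2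
  refine key2.trans (le_of_eq ?_)
  congr 1
  rw [Real.inv_rpow hn.le, ← Real.rpow_neg hn.le]
  rw [show (s.card:ℝ) * (s.card:ℝ) ^ (-α) = (s.card:ℝ)^(1:ℝ) * (s.card:ℝ) ^ (-α) by rw [Real.rpow_one], ← Real.rpow_add hn]
  ring_nf


set_option maxHeartbeats 1000000 in
/-- If a nonincreasing probability sequence `(p_i)_{i ≥ 1}` has tails
`Σ_{i > ⌈D e^{c√k}⌉} p_i ≤ e^{-2k}` for all `k ≥ 1`, then its Rényi-α entropy is at most
`log D + c²/α + O(1/(α(1-α)))`. (Here `p : ℕ → ℝ` is 0-indexed, so `p 0` is the first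
term and the 1-indexed tail `Σ_{i > m} p_i` corresponds to the 0-indexed indices `≥ m`.) -/
theorem renyi_entropy_of_exponential_tails :
    ∃ C : ℝ, 0 < C ∧
      ∀ p : ℕ → ℝ, (∀ i, 0 ≤ p i) → Antitone p → Summable p → (∑' i, p i) = 1 →
      ∀ D : ℕ, 1 ≤ D → ∀ c : ℝ, 0 ≤ c →
      (∀ k : ℕ, 1 ≤ k →
        (∑' i : ℕ, if ⌈(D : ℝ) * Real.exp (c * Real.sqrt k)⌉₊ ≤ i then p i else 0) ≤
          Real.exp (-2 * k)) →
      ∀ α : ℝ, 0 < α → α < 1 →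
        (1 - α)⁻¹ * Real.log (∑' i, p i ^ α) ≤
          Real.log D + c ^ 2 / α + C / (α * (1 - α)) := by
  classical
  refine ⟨10, by norm_num, ?_⟩
  intro p hp0 hmono hsum htot D hD c hc htail α hα0 hα1
  set β : ℝ := 1 - α with hβdef
  have hβ : 0 < β := by rw [hβdef]; linarith
  have hβ1 : β ≤ 1 := by rw [hβdef]; linarith
  set M : ℕ → ℕ := fun k => ⌈(D : ℝ) * Real.exp (c * Real.sqrt k)⌉₊ with hMdef
  have hD1 : (1:ℝ) ≤ (D:ℝ) := by exact_mod_cast hD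
  have hx1 : ∀ k : ℕ, (1:ℝ) ≤ (D : ℝ) * Real.exp (c * Real.sqrt k) := by
    intro k
    have h1 : (1:ℝ) ≤ Real.exp (c * Real.sqrt k) :=
      Real.one_le_exp (by positivity)
    nlinarith
  have hMle : ∀ k : ℕ, (M k : ℝ) ≤ 2 * ((D:ℝ) * Real.exp (c * Real.sqrt k)) := by
    intro k
    have h := (Nat.ceil_lt_add_one (by positivity : (0:ℝ) ≤ (D : ℝ) * Real.exp (c * Real.sqrt k))).le
    have h2 := hx1 k
    rw [hMdef]
    simp only []
    linarith
  have hMmono : Monotone M := by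
    intro k l hkl
    rw [hMdef]
    simp only []
    apply Nat.ceil_le_ceil
    have h1 : Real.sqrt k ≤ Real.sqrt l := Real.sqrt_le_sqrt (by exact_mod_cast hkl)
    have h2 : Real.exp (c * Real.sqrt k) ≤ Real.exp (c * Real.sqrt l) :=
      Real.exp_le_exp.2 (by nlinarith)
    nlinarith
  have hpα : ∀ i, 0 ≤ p i ^ α := fun i => Real.rpow_nonneg (hp0 i) α
  have hind : ∀ k : ℕ, Summable (fun i => if M k ≤ i then p i else 0) := by
    intro k
    refine Summable.of_nonneg_of_le (fun i => ?_) (fun i => ?_) hsum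
    · split <;> simp [hp0 i]
    · split <;> simp [hp0 i]
  have htail' : ∀ k : ℕ, 1 ≤ k → ∀ s : Finset ℕ, (∀ i ∈ s, M k ≤ i) →
      ∑ i ∈ s, p i ≤ Real.exp (-2 * k) := by
    intro k hk s hs
    have h1 : ∑ i ∈ s, p i = ∑ i ∈ s, (if M k ≤ i then p i else 0) :=
      Finset.sum_congr rfl fun i hi => by rw [if_pos (hs i hi)]
    rw [h1]
    refine (Summable.sum_le_tsum s (fun i _ => by split <;> simp [hp0 i]) (hind k)).trans ?_
    simpa only [hMdef] using htail k hk
  have hpoint : ∀ k : ℕ, 1 ≤ k → ∀ i : ℕ, M k ≤ i → p i ≤ Real.exp (-2 * k) := by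
    intro k hk i hi
    simpa using htail' k hk {i} (by simpa using hi)
  -- AM-GM key
  have hexpkey : ∀ s : ℝ, β * (c * s) - α * s^2 ≤ c^2 * β^2 / (4*α) := by
    intro s
    rw [le_div_iff₀ (by positivity : (0:ℝ) < 4*α)]
    nlinarith [sq_nonneg (β*c - 2*α*s)]
  set A : ℝ := (2 * (D:ℝ)) ^ β * Real.exp (c^2 * β^2 / (4*α)) * Real.exp α with hAdef
  have h2Dpos : (0:ℝ) < 2 * (D:ℝ) := by linarith
  have hApos : 0 < A := by
    rw [hAdef]
    have := Real.rpow_pos_of_pos h2Dpos β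
    positivity
  -- generic bound for a block contained in [M k, M (k+1))
  have hbase : ∀ k : ℕ, ((M (k+1) : ℝ)) ^ β ≤ (2*(D:ℝ))^β * Real.exp (β * (c * Real.sqrt ((k:ℝ)+1))) := by
    intro k
    have h1 := hMle (k+1)
    push_cast at h1
    calc ((M (k+1) : ℝ)) ^ β ≤ (2 * ((D:ℝ) * Real.exp (c * Real.sqrt ((k:ℝ)+1)))) ^ β :=
          Real.rpow_le_rpow (by positivity) h1 hβ.le
      _ = (2*(D:ℝ))^β * Real.exp (β * (c * Real.sqrt ((k:ℝ)+1))) := by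
          rw [show (2 : ℝ) * ((D:ℝ) * Real.exp (c * Real.sqrt ((k:ℝ)+1)))
              = (2*(D:ℝ)) * Real.exp (c * Real.sqrt ((k:ℝ)+1)) by ring,
            Real.mul_rpow h2Dpos.le (Real.exp_pos _).le, ← Real.exp_mul, mul_comm (c * Real.sqrt ((k:ℝ)+1)) β]
  have hblock : ∀ k : ℕ, 1 ≤ k →
      ∑ i ∈ Finset.Ico (M k) (M (k+1)), p i ^ α ≤ A * Real.exp (-α) ^ k := by
    intro k hk
    have h1 := sum_rpow_le_card_rpow_mul (Finset.Ico (M k) (M (k+1))) p (fun i _ => hp0 i) hα0 hα1.le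
    have hcard : (((Finset.Ico (M k) (M (k+1))).card : ℕ) : ℝ) ≤ (M (k+1) : ℝ) := by
      rw [Nat.card_Ico]
      exact_mod_cast Nat.sub_le _ _
    have hsums : ∑ i ∈ Finset.Ico (M k) (M (k+1)), p i ≤ Real.exp (-2*k) :=
      htail' k hk _ (fun i hi => (Finset.mem_Ico.1 hi).1)
    have hsumnn : (0:ℝ) ≤ ∑ i ∈ Finset.Ico (M k) (M (k+1)), p i :=
      Finset.sum_nonneg (fun i _ => hp0 i)
    have h2 : (((Finset.Ico (M k) (M (k+1))).card : ℕ) : ℝ) ^ β ≤ (M (k+1) : ℝ) ^ β :=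
      Real.rpow_le_rpow (by positivity) hcard hβ.le
    have h3 : (∑ i ∈ Finset.Ico (M k) (M (k+1)), p i) ^ α ≤ Real.exp (-2*k) ^ α :=
      Real.rpow_le_rpow hsumnn hsums hα0.le
    have h4 : ∑ i ∈ Finset.Ico (M k) (M (k+1)), p i ^ α
        ≤ (M (k+1) : ℝ) ^ β * Real.exp (-2*k) ^ α := by
      refine h1.trans ?_
      have := mul_le_mul h2 h3 (Real.rpow_nonneg hsumnn α) (by positivity)
      simpa [hβdef] using this
    refine h4.trans ?_
    have h5 : Real.exp (-2*(k:ℝ)) ^ α = Real.exp ((-2*(k:ℝ)) * α) := by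
      rw [← Real.exp_mul]
    have h6 := hbase k
    calc (M (k+1) : ℝ) ^ β * Real.exp (-2*(k:ℝ)) ^ α
        ≤ ((2*(D:ℝ))^β * Real.exp (β * (c * Real.sqrt ((k:ℝ)+1)))) * Real.exp ((-2*(k:ℝ)) * α) := by
          rw [h5]
          exact mul_le_mul_of_nonneg_right h6 (Real.exp_pos _).le
      _ = (2*(D:ℝ))^β * Real.exp (β * (c * Real.sqrt ((k:ℝ)+1)) + (-2*(k:ℝ)) * α) := by
          rw [Real.exp_add]; ring
      _ ≤ (2*(D:ℝ))^β * Real.exp (c^2 * β^2/(4*α) + α + (-α) * k) := by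
          have hgt : (0:ℝ) ≤ (k:ℝ) := Nat.cast_nonneg k
          have hsq : Real.sqrt ((k:ℝ)+1) ^ 2 = (k:ℝ)+1 := Real.sq_sqrt (by linarith)
          have hkey := hexpkey (Real.sqrt ((k:ℝ)+1))
          rw [hsq] at hkey
          have : β * (c * Real.sqrt ((k:ℝ)+1)) + (-2*(k:ℝ)) * α ≤ c^2 * β^2/(4*α) + α + (-α) * k := by
            nlinarith
          exact mul_le_mul_of_nonneg_left (Real.exp_le_exp.2 this) (Real.rpow_pos_of_pos h2Dpos β).le
      _ = A * Real.exp (-α) ^ k := by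
          rw [hAdef, show c^2 * β^2/(4*α) + α + (-α) * k = (c^2 * β^2/(4*α)) + α + (k:ℝ) * (-α) by ring,
            Real.exp_add, Real.exp_add, Real.exp_nat_mul]
          ring
  have hblock0 : ∑ i ∈ Finset.range (M 1), p i ^ α ≤ A := by
    have h1 := sum_rpow_le_card_rpow_mul (Finset.range (M 1)) p (fun i _ => hp0 i) hα0 hα1.le
    have hsum1 : ∑ i ∈ Finset.range (M 1), p i ≤ 1 := by
      rw [← htot]
      exact Summable.sum_le_tsum _ (fun i _ => hp0 i) hsum
    have hsumnn : (0:ℝ) ≤ ∑ i ∈ Finset.range (M 1), p i :=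
      Finset.sum_nonneg (fun i _ => hp0 i)
    have h2 : (∑ i ∈ Finset.range (M 1), p i) ^ α ≤ 1 :=
      Real.rpow_le_one hsumnn hsum1 hα0.le
    have h3 : ((Finset.range (M 1)).card : ℝ) ^ β ≤ (2*(D:ℝ))^β * Real.exp (β * (c * 1)) := by
      rw [Finset.card_range]
      have h4 : (M 1 : ℝ) ≤ 2 * ((D:ℝ) * Real.exp (c * Real.sqrt (1:ℕ))) := hMle 1
      rw [show ((1:ℕ):ℝ) = (1:ℝ) by norm_num, Real.sqrt_one] at h4
      calc ((M 1 : ℕ) : ℝ) ^ β ≤ (2 * ((D:ℝ) * Real.exp (c * 1))) ^ β :=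
            Real.rpow_le_rpow (by positivity) h4 hβ.le
        _ = (2*(D:ℝ))^β * Real.exp (β * (c * 1)) := by
            rw [show (2 : ℝ) * ((D:ℝ) * Real.exp (c*1)) = (2*(D:ℝ)) * Real.exp (c*1) by ring,
              Real.mul_rpow h2Dpos.le (Real.exp_pos _).le, ← Real.exp_mul, mul_comm (c*1) β]
    have h5 : Real.exp (β * (c * 1)) ≤ Real.exp (c^2*β^2/(4*α)) * Real.exp α := by
      rw [← Real.exp_add]
      apply Real.exp_le_exp.2
      have := hexpkey 1
      nlinarith
    calc ∑ i ∈ Finset.range (M 1), p i ^ α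
        ≤ ((Finset.range (M 1)).card : ℝ) ^ β * (∑ i ∈ Finset.range (M 1), p i) ^ α := by
          simpa [hβdef] using h1
      _ ≤ ((Finset.range (M 1)).card : ℝ) ^ β * 1 :=
          mul_le_mul_of_nonneg_left h2 (Real.rpow_nonneg (Nat.cast_nonneg _) β)
      _ = ((Finset.range (M 1)).card : ℝ) ^ β := mul_one _
      _ ≤ (2*(D:ℝ))^β * Real.exp (β * (c * 1)) := h3
      _ ≤ (2*(D:ℝ))^β * (Real.exp (c^2*β^2/(4*α)) * Real.exp α) :=
          mul_le_mul_of_nonneg_left h5 (Real.rpow_pos_of_pos h2Dpos β).le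
      _ = A := by rw [hAdef]; ring
  -- geometric facts
  have hr0 : (0:ℝ) ≤ Real.exp (-α) := (Real.exp_pos _).le
  have hr1 : Real.exp (-α) < 1 := Real.exp_lt_one_iff.2 (by linarith)
  have hgsummable : Summable (fun k : ℕ => A * Real.exp (-α) ^ k) :=
    (summable_geometric_of_lt_one hr0 hr1).mul_left A
  have hgeo : ∑' k : ℕ, A * Real.exp (-α) ^ k = A * (1 - Real.exp (-α))⁻¹ := by
    rw [tsum_mul_left, tsum_geometric_of_lt_one hr0 hr1]
  -- master bound
  have master : ∀ F : Finset ℕ, ∑ i ∈ F, p i ^ α ≤ A * (1 - Real.exp (-α))⁻¹ := by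
    intro F
    rw [← Finset.sum_filter_add_sum_filter_not F (fun i => i < M 1)]
    have hpart1 : ∑ i ∈ F.filter (fun i => i < M 1), p i ^ α ≤ A := by
      refine le_trans (Finset.sum_le_sum_of_subset_of_nonneg ?_ (fun i _ _ => hpα i)) hblock0
      intro i hi
      rw [Finset.mem_filter] at hi
      exact Finset.mem_range.2 hi.2
    set G := (F.filter (fun i => ¬ i < M 1)).filter (fun i => p i ≠ 0) with hGdef
    have hpart2eq : ∑ i ∈ F.filter (fun i => ¬ i < M 1), p i ^ α = ∑ i ∈ G, p i ^ α := by
      rw [hGdef]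
      symm
      apply Finset.sum_filter_of_ne
      intro x hx h0 hpx
      exact h0 (by rw [hpx]; exact Real.zero_rpow hα0.ne')
    obtain ⟨k₀, hk₀1, hGle⟩ : ∃ k₀ : ℕ, 1 ≤ k₀ ∧
        ∑ i ∈ G, p i ^ α ≤ ∑ k ∈ Finset.Icc 1 k₀, A * Real.exp (-α) ^ k := by
      rcases G.eq_empty_or_nonempty with hGe | hGne
      · refine ⟨1, le_rfl, ?_⟩
        rw [hGe]
        simp only [Finset.sum_empty]
        exact Finset.sum_nonneg (fun k _ => by positivity)
      · set i₀ := G.max' hGne with hi₀def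
        set ε := p i₀ with hεdef
        have hi₀mem : i₀ ∈ G := G.max'_mem hGne
        have hεpos : 0 < ε := by
          have h1 : p i₀ ≠ 0 := (Finset.mem_filter.1 hi₀mem).2
          exact lt_of_le_of_ne (hp0 i₀) (Ne.symm h1)
        have hεle : ∀ i ∈ G, ε ≤ p i := fun i hi => hmono (G.le_max' i hi)
        obtain ⟨n, hn⟩ := exists_nat_gt (1/ε)
        set k₀ := n + 1 with hk₀def
        have hk₀1 : 1 ≤ k₀ := by omega
        have hexpk₀ : Real.exp (-2*(k₀:ℝ)) < ε := by
          have hE : (0:ℝ) < Real.exp (2*(k₀:ℝ)) := Real.exp_pos _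
          have h1 : (1:ℝ)/ε < Real.exp (2*(k₀:ℝ)) := by
            have h2 : (1:ℝ)/ε < (n:ℝ) := hn
            have h3 : (n:ℝ) ≤ 2*(k₀:ℝ) := by
              rw [hk₀def]; push_cast; linarith [Nat.cast_nonneg (α := ℝ) n]
            linarith [Real.add_one_le_exp (2*(k₀:ℝ))]
          have h4 : Real.exp (-2*(k₀:ℝ)) = 1 / Real.exp (2*(k₀:ℝ)) := by
            rw [one_div, ← Real.exp_neg]; ring_nf
          rw [h4, div_lt_iff₀ hE]
          rw [div_lt_iff₀ hεpos] at h1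
          linarith [h1, mul_comm ε (Real.exp (2*(k₀:ℝ)))]
        have hiM : ∀ i ∈ G, i < M k₀ := by
          intro i hi
          by_contra h
          push_neg at h
          have := hpoint k₀ hk₀1 i h
          linarith [hεle i hi]
        have hsub : G ⊆ (Finset.Icc 1 k₀).biUnion (fun k => Finset.Ico (M k) (M (k+1))) := by
          intro i hi
          have hiM1 : M 1 ≤ i := by
            have h1 := (Finset.mem_filter.1 ((Finset.mem_filter.1 hi).1)).2
            omega
          set P : ℕ → Prop := fun k => M k ≤ i with hPdef
          have hP1 : P 1 := hiM1
          set k' := Nat.findGreatest P k₀ with hk'def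
          have h1k' : 1 ≤ k' := Nat.le_findGreatest hk₀1 hP1
          have hPk' : P k' := Nat.findGreatest_spec hk₀1 hP1
          have hk'le : k' ≤ k₀ := Nat.findGreatest_le k₀
          have hk'lt : k' < k₀ := by
            rcases lt_or_eq_of_le hk'le with h | h
            · exact h
            · exfalso
              rw [h] at hPk'
              exact absurd hPk' (not_le.2 (hiM i hi))
          have hnot : ¬ P (k'+1) :=
            Nat.findGreatest_is_greatest (Nat.lt_succ_self k') (by omega)
          refine Finset.mem_biUnion.2 ⟨k', Finset.mem_Icc.2 ⟨h1k', hk'le⟩,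
            Finset.mem_Ico.2 ⟨hPk', not_le.1 hnot⟩⟩
        have hdisj : (↑(Finset.Icc 1 k₀) : Set ℕ).PairwiseDisjoint
            (fun k => Finset.Ico (M k) (M (k+1))) := by
          intro a _ b _ hab
          have key : ∀ x y : ℕ, x < y →
              Disjoint (Finset.Ico (M x) (M (x+1))) (Finset.Ico (M y) (M (y+1))) := by
            intro x y hxy
            refine Finset.disjoint_left.2 (fun i hix hiy => ?_)
            have h1 := (Finset.mem_Ico.1 hix).2
            have h2 := (Finset.mem_Ico.1 hiy).1
            have h3 : M (x+1) ≤ M y := hMmono (by omega)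
            omega
          rcases hab.lt_or_gt with h | h
          · exact key a b h
          · exact (key b a h).symm
        refine ⟨k₀, hk₀1, ?_⟩
        calc ∑ i ∈ G, p i ^ α
            ≤ ∑ i ∈ (Finset.Icc 1 k₀).biUnion (fun k => Finset.Ico (M k) (M (k+1))), p i ^ α :=
              Finset.sum_le_sum_of_subset_of_nonneg hsub (fun i _ _ => hpα i)
          _ = ∑ k ∈ Finset.Icc 1 k₀, ∑ i ∈ Finset.Ico (M k) (M (k+1)), p i ^ α :=
              Finset.sum_biUnion hdisj
          _ ≤ ∑ k ∈ Finset.Icc 1 k₀, A * Real.exp (-α) ^ k :=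
              Finset.sum_le_sum (fun k hk => hblock k (Finset.mem_Icc.1 hk).1)
    have hrange : Finset.range (k₀+1) = insert 0 (Finset.Icc 1 k₀) := by
      ext x
      simp [Finset.mem_range, Finset.mem_Icc]
      omega
    have hcomb : A + ∑ k ∈ Finset.Icc 1 k₀, A * Real.exp (-α) ^ k
        = ∑ k ∈ Finset.range (k₀+1), A * Real.exp (-α) ^ k := by
      rw [hrange, Finset.sum_insert (by simp)]
      simp
    calc ∑ i ∈ F.filter (fun i => i < M 1), p i ^ α
          + ∑ i ∈ F.filter (fun i => ¬ i < M 1), p i ^ α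
        ≤ A + ∑ k ∈ Finset.Icc 1 k₀, A * Real.exp (-α) ^ k := by
          rw [hpart2eq]
          exact add_le_add hpart1 hGle
      _ = ∑ k ∈ Finset.range (k₀+1), A * Real.exp (-α) ^ k := hcomb
      _ ≤ ∑' k : ℕ, A * Real.exp (-α) ^ k :=
          Summable.sum_le_tsum _ (fun k _ => by positivity) hgsummable
      _ = A * (1 - Real.exp (-α))⁻¹ := hgeo
  -- summability & tsum bound
  have hSsummable : Summable (fun i => p i ^ α) :=
    summable_of_sum_le (fun i => hpα i) master
  have hSle : (∑' i, p i ^ α) ≤ A * (1 - Real.exp (-α))⁻¹ :=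
    Summable.tsum_le_of_sum_le hSsummable master
  -- positivity of the sum
  have hp0pos : 0 < p 0 := by
    by_contra h
    push_neg at h
    have h0 : p 0 = 0 := le_antisymm h (hp0 0)
    have hall : ∀ i, p i = 0 := fun i => le_antisymm (h0 ▸ hmono (Nat.zero_le i)) (hp0 i)
    rw [show p = fun _ => (0:ℝ) from funext hall] at htot
    simp at htot
  have hSpos : 0 < ∑' i, p i ^ α :=
    lt_of_lt_of_le (Real.rpow_pos_of_pos hp0pos α) (Summable.le_tsum hSsummable 0 (fun j _ => hpα j))
  -- final numeric bound
  set T : ℝ := (2*(D:ℝ))^β * Real.exp (c^2*β^2/(4*α)) * (Real.exp 2 / α) with hTdef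
  have hTpos : 0 < T := by
    rw [hTdef]
    have := Real.rpow_pos_of_pos h2Dpos β
    positivity
  have hT : A * (1 - Real.exp (-α))⁻¹ ≤ T := by
    have h1r : (0:ℝ) < 1 - Real.exp (-α) := by linarith
    have hkey : α ≤ (1 - Real.exp (-α)) * Real.exp α := by
      rw [sub_mul, ← Real.exp_add, one_mul]
      simp only [neg_add_cancel, Real.exp_zero]
      linarith [Real.add_one_le_exp α]
    have h2 : (1 - Real.exp (-α))⁻¹ ≤ Real.exp α / α := by
      rw [← one_div, div_le_div_iff₀ h1r hα0]
      nlinarith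
    have h3 : A * (1 - Real.exp (-α))⁻¹ ≤ A * (Real.exp α / α) :=
      mul_le_mul_of_nonneg_left h2 hApos.le
    refine h3.trans ?_
    rw [hAdef, hTdef]
    have hEpos : (0:ℝ) < (2*(D:ℝ))^β * Real.exp (c^2*β^2/(4*α)) := by
      have := Real.rpow_pos_of_pos h2Dpos β
      positivity
    have h5 : Real.exp α * (Real.exp α / α) ≤ Real.exp 2 / α := by
      rw [show Real.exp α * (Real.exp α / α) = Real.exp (α+α) / α by rw [Real.exp_add]; ring,
        div_le_div_iff₀ hα0 hα0]
      have : Real.exp (α+α) ≤ Real.exp 2 := Real.exp_le_exp.2 (by linarith)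
      nlinarith [Real.exp_pos (α+α), Real.exp_pos 2]
    calc (2*(D:ℝ))^β * Real.exp (c^2*β^2/(4*α)) * Real.exp α * (Real.exp α / α)
        = ((2*(D:ℝ))^β * Real.exp (c^2*β^2/(4*α))) * (Real.exp α * (Real.exp α / α)) := by ring
      _ ≤ ((2*(D:ℝ))^β * Real.exp (c^2*β^2/(4*α))) * (Real.exp 2 / α) :=
          mul_le_mul_of_nonneg_left h5 hEpos.le
  have hlogle : Real.log (∑' i, p i ^ α) ≤ Real.log T :=
    Real.log_le_log hSpos (hSle.trans hT)
  have hDne : ((D:ℝ)) ≠ 0 := by positivity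
  have hlogT : Real.log T = β * (Real.log 2 + Real.log D) + c^2*β^2/(4*α) + (2 - Real.log α) := by
    rw [hTdef]
    rw [Real.log_mul (by positivity) (by positivity), Real.log_mul (ne_of_gt (Real.rpow_pos_of_pos h2Dpos β)) (Real.exp_ne_zero _)]
    rw [Real.log_rpow h2Dpos, Real.log_exp, Real.log_div (Real.exp_ne_zero _) hα0.ne', Real.log_exp]
    rw [Real.log_mul (by norm_num) hDne]
  have hstep : β⁻¹ * Real.log T ≤ Real.log D + c^2/α + 10/(α*β) := by
    rw [hlogT]
    have hlog2 : Real.log 2 ≤ 1 := by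
      have := Real.log_le_sub_one_of_pos (by norm_num : (0:ℝ) < 2); linarith
    have hlogD0 : 0 ≤ Real.log (D:ℝ) := Real.log_nonneg hD1
    have hlogα : -Real.log α ≤ α⁻¹ - 1 := by
      have := Real.log_le_sub_one_of_pos (inv_pos.2 hα0)
      rw [Real.log_inv] at this; linarith
    have heq : β⁻¹ * (β*(Real.log 2 + Real.log (D:ℝ)) + c^2*β^2/(4*α) + (2 - Real.log α))
        = (Real.log 2 + Real.log (D:ℝ)) + c^2*β/(4*α) + (2 - Real.log α)/β := by
      field_simp
    rw [heq]
    have h2 : c^2*β/(4*α) ≤ c^2/α := by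
      rw [div_le_div_iff₀ (by positivity) hα0]
      nlinarith [mul_nonneg (sq_nonneg c) hα0.le]
    have h3 : (2 - Real.log α)/β ≤ 2/(α*β) := by
      rw [div_le_div_iff₀ hβ (by positivity)]
      have h31 : (2 - Real.log α) ≤ 1 + α⁻¹ := by linarith
      have h32 : (2 - Real.log α) * (α*β) ≤ (1 + α⁻¹) * (α*β) :=
        mul_le_mul_of_nonneg_right h31 (by positivity)
      have h33 : (1 + α⁻¹) * (α*β) = (α + 1) * β := by
        field_simp
      have h34 : (α + 1) * β ≤ 2 * β :=
        mul_le_mul_of_nonneg_right (by linarith) hβ.le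
      exact le_trans h32 (le_trans (le_of_eq h33) h34)
    have h4 : (1:ℝ) ≤ 1/(α*β) := by
      rw [le_div_iff₀ (by positivity)]
      nlinarith
    have h5 : 2/(α*β) = 2 * (1/(α*β)) := by ring
    have h6 : 10/(α*β) = 10 * (1/(α*β)) := by ring
    rw [h6]
    rw [h5] at h3
    linarith
  calc β⁻¹ * Real.log (∑' i, p i ^ α) ≤ β⁻¹ * Real.log T :=
      mul_le_mul_of_nonneg_left hlogle (inv_nonneg.2 hβ.le)
    _ ≤ Real.log D + c^2/α + 10/(α*β) := hstep
end

section
/- There is a universal constant C such that for every n ≥ 1, every λ ∈ [0,1], and every x ≥ 0, the domain-wall state φ₀ = |↑⟩^{⊗n} ⊗ |↓⟩^{⊗n} satisfies ⟨φ₀, P(2√(1-λ²), x) φ₀⟩ ≥ 1 - C·e^{-x/20}, where P denotes the spectral projector of H_XX. That is, φ₀ lies in an approximate microcanonical ensemble of H_XX with energy E = 2√(1-λ²) and Δ_a = 20. -/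
open Matrix
noncomputable section

/-- Euclidean norm of a vector indexed by a finite type. -/
def evNorm {ι : Type*} [Fintype ι] (ψ : ι → ℂ) : ℝ := Real.sqrt (∑ x, ‖ψ x‖ ^ 2)

/-- Hermitian inner product of two vectors. -/
def cinner {ι : Type*} [Fintype ι] (φ ψ : ι → ℂ) : ℂ := ∑ x, (starRingEnd ℂ) (φ x) * ψ x

/-- The ℓ²→ℓ² operator norm of a square complex matrix. -/
def opNorm {ι : Type*} [Fintype ι] [DecidableEq ι] (A : Matrix ι ι ℂ) : ℝ :=
  ‖Matrix.toEuclideanCLM (𝕜 := ℂ) A‖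

open scoped Classical in
/-- Spectral projector `P(E, δ)` of a Hermitian matrix: the orthogonal projection onto
the span of eigenvectors with eigenvalue in `[E - δ, E + δ]`.
(Defined to be `0` on non-Hermitian matrices.) -/
def specProj {ι : Type*} [Fintype ι] [DecidableEq ι] (H : Matrix ι ι ℂ) (E δ : ℝ) :
    Matrix ι ι ℂ :=
  if hH : H.IsHermitian then
    (hH.eigenvectorUnitary : Matrix ι ι ℂ) *
      Matrix.diagonal (fun j => if |hH.eigenvalues j - E| ≤ δ then (1 : ℂ) else 0) *
      (star (hH.eigenvectorUnitary : Matrix ι ι ℂ))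
  else 0

/-- Time evolution operator `e^{-iHt}`. -/
def texp {ι : Type*} [Fintype ι] [DecidableEq ι] (H : Matrix ι ι ℂ) (t : ℝ) :
    Matrix ι ι ℂ :=
  NormedSpace.exp ((-(Complex.I * (t : ℂ))) • H)

/-- The reshaping of a state of `n` qudits (local dimension `d`) into a `d^a × d^(n-a)`
matrix across the cut between sites `a` and `a+1` (sites numbered `1, …, n`; the
row index collects sites `1..a`, the column index sites `a+1..n`). -/
def cutMatrix (n d a : ℕ) (ψ : (Fin n → Fin d) → ℂ) :
    Matrix (Fin a → Fin d) (Fin (n - a) → Fin d) ℂ :=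
  Matrix.of fun x y =>
    ψ (fun i => if h : (i : ℕ) < a then x ⟨i, h⟩ else y ⟨(i : ℕ) - a, by omega⟩)

/-- Squared Schmidt coefficients of a bipartite state given as a matrix `M`:
the eigenvalues of `M Mᴴ`. -/
def schmidtSq {A B : Type*} [Fintype A] [Fintype B] [DecidableEq A]
    (M : Matrix A B ℂ) : A → ℝ :=
  (Matrix.isHermitian_mul_conjTranspose_self M).eigenvalues

/-- The Rényi-α entanglement entropy of a bipartite state given as a matrix. -/
def renyiEnt (α : ℝ) {A B : Type*} [Fintype A] [Fintype B] [DecidableEq A]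
    (M : Matrix A B ℂ) : ℝ :=
  (1 - α)⁻¹ * Real.log (∑ i, schmidtSq M i ^ α)

/-- The von Neumann entanglement entropy of a bipartite state given as a matrix. -/
def vnEnt {A B : Type*} [Fintype A] [Fintype B] [DecidableEq A]
    (M : Matrix A B ℂ) : ℝ :=
  ∑ i, Real.negMulLog (schmidtSq M i)

/-- Pauli matrix σˣ. -/
def pauliX : Matrix (Fin 2) (Fin 2) ℂ := !![0, 1; 1, 0]
/-- Pauli matrix σʸ. -/
def pauliY : Matrix (Fin 2) (Fin 2) ℂ := !![0, -Complex.I; Complex.I, 0]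
/-- Pauli matrix σᶻ. -/
def pauliZ : Matrix (Fin 2) (Fin 2) ℂ := !![1, 0; 0, -1]

open scoped Classical in
/-- The one-site operator `A` at site `j` of a chain of `n` qubits,
tensored with the identity on all other sites. -/
def liftAt (n : ℕ) (j : Fin n) (A : Matrix (Fin 2) (Fin 2) ℂ) :
    Matrix (Fin n → Fin 2) (Fin n → Fin 2) ℂ :=
  Matrix.of fun x y => if ∀ i, i ≠ j → x i = y i then A (x j) (y j) else 0

/-- `σ_j^x σ_{j+1}^x` on a chain of `m` qubits (`j` is 0-based). -/
def nnXX (m : ℕ) (j : Fin (m - 1)) : Matrix (Fin m → Fin 2) (Fin m → Fin 2) ℂ :=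
  liftAt m ⟨j.1, by have := j.isLt; omega⟩ pauliX *
    liftAt m ⟨j.1 + 1, by have := j.isLt; omega⟩ pauliX

/-- `σ_j^y σ_{j+1}^y` on a chain of `m` qubits (`j` is 0-based). -/
def nnYY (m : ℕ) (j : Fin (m - 1)) : Matrix (Fin m → Fin 2) (Fin m → Fin 2) ℂ :=
  liftAt m ⟨j.1, by have := j.isLt; omega⟩ pauliY *
    liftAt m ⟨j.1 + 1, by have := j.isLt; omega⟩ pauliY

open scoped Classical in
/-- `σ_n^x σ_{n+1}^x + σ_n^y σ_{n+1}^y` across the middle cut of a chain of `2n` qubits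
(sites `n` and `n+1` in 1-based labelling are the 0-based indices `n-1` and `n`). -/
def midXXYY (n : ℕ) : Matrix (Fin (2 * n) → Fin 2) (Fin (2 * n) → Fin 2) ℂ :=
  ∑ j : Fin (2 * n - 1), if (j : ℕ) = n - 1 then nnXX (2 * n) j + nnYY (2 * n) j else 0

open scoped Classical in
/-- `σ_n^z - σ_{n+1}^z` at the middle cut of a chain of `2n` qubits. -/
def midZdiff (n : ℕ) : Matrix (Fin (2 * n) → Fin 2) (Fin (2 * n) → Fin 2) ℂ :=
  ∑ j : Fin (2 * n - 1), if (j : ℕ) = n - 1 then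
    liftAt (2 * n) ⟨j.1, by have := j.isLt; omega⟩ pauliZ -
      liftAt (2 * n) ⟨j.1 + 1, by have := j.isLt; omega⟩ pauliZ
  else 0

/-- The XX chain of length `2n` with a defect in the middle:
`H_XX = (1-λ)(σ_n^x σ_{n+1}^x + σ_n^y σ_{n+1}^y) + √(1-λ²)(σ_n^z - σ_{n+1}^z)
        - Σ_{j=1}^{2n-1} (σ_j^x σ_{j+1}^x + σ_j^y σ_{j+1}^y)`. -/
def xxH (n : ℕ) (lam : ℝ) : Matrix (Fin (2 * n) → Fin 2) (Fin (2 * n) → Fin 2) ℂ :=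
  ((1 : ℂ) - (lam : ℂ)) • midXXYY n + (Real.sqrt (1 - lam ^ 2) : ℂ) • midZdiff n -
    ∑ j : Fin (2 * n - 1), (nnXX (2 * n) j + nnYY (2 * n) j)

/-- The term of `H_XX` across the middle cut:
`H_∂ = -λ (σ_n^x σ_{n+1}^x + σ_n^y σ_{n+1}^y)`. -/
def xxDefect (n : ℕ) (lam : ℝ) : Matrix (Fin (2 * n) → Fin 2) (Fin (2 * n) → Fin 2) ℂ :=
  (-(lam : ℂ)) • midXXYY n

/-- The domain-wall state `φ₀ = |↑⟩^{⊗n} ⊗ |↓⟩^{⊗n}` on `2n` qubits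
(`|↑⟩ = e₀`, `|↓⟩ = e₁` are the `±1` eigenvectors of `σᶻ`). -/
def dwState (n : ℕ) : (Fin (2 * n) → Fin 2) → ℂ :=
  fun x => if (∀ i : Fin (2 * n), (x i : ℕ) = if (i : ℕ) < n then 0 else 1) then 1 else 0

namespace Aux
variable {ι : Type*} [Fintype ι]

lemma cinner_eq_dot (φ ψ : ι → ℂ) : cinner φ ψ = dotProduct (star φ) ψ := by
  simp [cinner, dotProduct, Pi.star_apply, RCLike.star_def]

lemma cinner_self (ψ : ι → ℂ) : cinner ψ ψ = ((∑ x, ‖ψ x‖ ^ 2 : ℝ) : ℂ) := by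
  unfold cinner
  push_cast
  refine Finset.sum_congr rfl fun x _ => ?_
  rw [mul_comm, Complex.mul_conj']

lemma evNorm_nonneg (ψ : ι → ℂ) : 0 ≤ evNorm ψ := Real.sqrt_nonneg _

lemma evNorm_sq (ψ : ι → ℂ) : evNorm ψ ^ 2 = ∑ x, ‖ψ x‖ ^ 2 := by
  rw [evNorm, Real.sq_sqrt]
  exact Finset.sum_nonneg fun x _ => sq_nonneg _

lemma cinner_self_re (ψ : ι → ℂ) : (cinner ψ ψ).re = evNorm ψ ^ 2 := by
  rw [cinner_self, evNorm_sq, Complex.ofReal_re]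

lemma evNorm_eq_norm (ψ : ι → ℂ) :
    evNorm ψ = ‖(WithLp.equiv 2 (ι → ℂ)).symm ψ‖ := by
  rw [EuclideanSpace.norm_eq]; rfl

lemma evNorm_add_le (φ ψ : ι → ℂ) : evNorm (φ + ψ) ≤ evNorm φ + evNorm ψ := by
  simp only [evNorm_eq_norm]
  rw [show (WithLp.equiv 2 (ι → ℂ)).symm (φ + ψ) =
      (WithLp.equiv 2 (ι → ℂ)).symm φ + (WithLp.equiv 2 (ι → ℂ)).symm ψ from rfl]
  exact norm_add_le _ _

lemma evNorm_smul (c : ℂ) (ψ : ι → ℂ) : evNorm (c • ψ) = ‖c‖ * evNorm ψ := by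
  simp only [evNorm_eq_norm]
  rw [show (WithLp.equiv 2 (ι → ℂ)).symm (c • ψ) =
      c • (WithLp.equiv 2 (ι → ℂ)).symm ψ from rfl]
  exact norm_smul _ _

lemma evNorm_zero : evNorm (0 : ι → ℂ) = 0 := by
  simp [evNorm]

lemma evNorm_neg (ψ : ι → ℂ) : evNorm (-ψ) = evNorm ψ := by
  simp [evNorm]

lemma evNorm_sub_le (φ ψ : ι → ℂ) : evNorm (φ - ψ) ≤ evNorm φ + evNorm ψ := by
  rw [sub_eq_add_neg]
  simpa [evNorm_neg] using evNorm_add_le φ (-ψ)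

lemma evNorm_sum_le {α : Type*} (s : Finset α) (f : α → ι → ℂ) :
    evNorm (∑ a ∈ s, f a) ≤ ∑ a ∈ s, evNorm (f a) := by
  classical
  induction s using Finset.induction with
  | empty => simp [evNorm_zero]
  | insert _ _ h ih =>
      rw [Finset.sum_insert h, Finset.sum_insert h]
      exact le_trans (evNorm_add_le _ _) (by linarith)

lemma evNorm_le_of_pointwise {φ ψ : ι → ℂ} {c : ℝ} (hc : 0 ≤ c)
    (h : ∀ x, ‖φ x‖ ≤ c * ‖ψ x‖) : evNorm φ ≤ c * evNorm ψ := by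
  rw [evNorm, evNorm, ← Real.sqrt_sq hc, ← Real.sqrt_mul (sq_nonneg c)]
  apply Real.sqrt_le_sqrt
  rw [Finset.mul_sum]
  refine Finset.sum_le_sum fun x _ => ?_
  calc ‖φ x‖ ^ 2 ≤ (c * ‖ψ x‖) ^ 2 := by
        apply pow_le_pow_left₀ (norm_nonneg _) (h x)
    _ = c ^ 2 * ‖ψ x‖ ^ 2 := by ring

end Aux

namespace Aux

lemma liftAt_mul_apply {m : ℕ} (p q : Fin m) (hpq : p ≠ q)
    (A B : Matrix (Fin 2) (Fin 2) ℂ) (x y : Fin m → Fin 2) :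
    (liftAt m p A * liftAt m q B) x y =
      if ∀ i, i ≠ p → i ≠ q → x i = y i then A (x p) (y p) * B (x q) (y q) else 0 := by
  classical
  rw [Matrix.mul_apply]
  simp only [liftAt, Matrix.of_apply]
  by_cases h : ∀ i, i ≠ p → i ≠ q → x i = y i
  · rw [if_pos h]
    rw [Finset.sum_eq_single (Function.update x p (y p))]
    · have h1 : ∀ i, i ≠ p → x i = Function.update x p (y p) i := by
        intro i hi; rw [Function.update_of_ne hi]
      have h2 : ∀ i, i ≠ q → Function.update x p (y p) i = y i := by
        intro i hi
        by_cases hip : i = p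
        · subst hip; rw [Function.update_self]
        · rw [Function.update_of_ne hip]; exact h i hip hi
      rw [if_pos h1, if_pos h2, Function.update_self, Function.update_of_ne hpq.symm]
    · intro z _ hz
      by_cases c1 : ∀ i, i ≠ p → x i = z i
      · by_cases c2 : ∀ i, i ≠ q → z i = y i
        · exfalso; apply hz; funext i
          by_cases hip : i = p
          · rw [hip, Function.update_self]; exact c2 p hpq
          · rw [Function.update_of_ne hip]; exact (c1 i hip).symm
        · rw [if_neg c2, mul_zero]
      · rw [if_neg c1, zero_mul]
    · intro habs; exact absurd (Finset.mem_univ _) habs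
  · rw [if_neg h]
    push_neg at h
    obtain ⟨i, hip, hiq, hixy⟩ := h
    apply Finset.sum_eq_zero
    intro z _
    by_cases c1 : ∀ i, i ≠ p → x i = z i
    · by_cases c2 : ∀ i, i ≠ q → z i = y i
      · exact absurd ((c1 i hip).trans (c2 i hiq)) hixy
      · rw [if_neg c2, mul_zero]
    · rw [if_neg c1, zero_mul]

/-- left site of bond `j`. -/
def jL {m : ℕ} (j : Fin (m - 1)) : Fin m := ⟨j.1, by have := j.isLt; omega⟩
/-- right site of bond `j`. -/
def jR {m : ℕ} (j : Fin (m - 1)) : Fin m := ⟨j.1 + 1, by have := j.isLt; omega⟩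

lemma jL_ne_jR {m : ℕ} (j : Fin (m - 1)) : jL j ≠ jR j := by
  simp only [jL, jR, Ne, Fin.mk.injEq]; omega

/-- Flip (swap) the values at the two sites of bond `j`. -/
def flipP (m : ℕ) (j : Fin (m - 1)) (x : Fin m → Fin 2) : Fin m → Fin 2 :=
  Function.update (Function.update x (jL j) (x (jR j))) (jR j) (x (jL j))

lemma flipP_jL {m : ℕ} (j : Fin (m - 1)) (x : Fin m → Fin 2) :
    flipP m j x (jL j) = x (jR j) := by
  rw [flipP, Function.update_of_ne (jL_ne_jR j), Function.update_self]

lemma flipP_jR {m : ℕ} (j : Fin (m - 1)) (x : Fin m → Fin 2) :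
    flipP m j x (jR j) = x (jL j) := by
  rw [flipP, Function.update_self]

lemma flipP_other {m : ℕ} (j : Fin (m - 1)) (x : Fin m → Fin 2) (i : Fin m)
    (h1 : i ≠ jL j) (h2 : i ≠ jR j) : flipP m j x i = x i := by
  rw [flipP, Function.update_of_ne h2, Function.update_of_ne h1]

lemma flipP_flipP {m : ℕ} (j : Fin (m - 1)) (x : Fin m → Fin 2) :
    flipP m j (flipP m j x) = x := by
  funext i
  by_cases h1 : i = jL j
  · rw [h1, flipP_jL, flipP_jR]
  · by_cases h2 : i = jR j
    · rw [h2, flipP_jR, flipP_jL]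
    · rw [flipP_other _ _ _ h1 h2, flipP_other _ _ _ h1 h2]

lemma pauli2 (a b c d : Fin 2) :
    pauliX a c * pauliX b d + pauliY a c * pauliY b d =
      if a ≠ b ∧ c = b ∧ d = a then 2 else 0 := by
  fin_cases a <;> fin_cases b <;> fin_cases c <;> fin_cases d <;>
    norm_num [pauliX, pauliY] <;> ring_nf <;> simp [Complex.I_sq]

lemma bond_apply {m : ℕ} (j : Fin (m - 1)) (x y : Fin m → Fin 2) :
    (nnXX m j + nnYY m j) x y =
      if x (jL j) ≠ x (jR j) ∧ y = flipP m j x then 2 else 0 := by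
  classical
  have hXX := liftAt_mul_apply (jL j) (jR j) (jL_ne_jR j) pauliX pauliX x y
  have hYY := liftAt_mul_apply (jL j) (jR j) (jL_ne_jR j) pauliY pauliY x y
  have e1 : nnXX m j = liftAt m (jL j) pauliX * liftAt m (jR j) pauliX := rfl
  have e2 : nnYY m j = liftAt m (jL j) pauliY * liftAt m (jR j) pauliY := rfl
  rw [Matrix.add_apply, e1, e2, hXX, hYY]
  by_cases hc : ∀ i, i ≠ jL j → i ≠ jR j → x i = y i
  · rw [if_pos hc, if_pos hc, pauli2]
    have hiff : (y = flipP m j x) ↔ (y (jL j) = x (jR j) ∧ y (jR j) = x (jL j)) := by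
      constructor
      · intro h; rw [h, flipP_jL, flipP_jR]; exact ⟨rfl, rfl⟩
      · rintro ⟨h1, h2⟩; funext i
        by_cases hil : i = jL j
        · rw [hil, flipP_jL]; exact h1
        · by_cases hir : i = jR j
          · rw [hir, flipP_jR]; exact h2
          · rw [flipP_other _ _ _ hil hir]; exact (hc i hil hir).symm
    by_cases hco : x (jL j) ≠ x (jR j) ∧ y = flipP m j x
    · rw [if_pos hco]
      obtain ⟨hne, hy⟩ := hco
      rw [if_pos ⟨hne, (hiff.mp hy).1, (hiff.mp hy).2⟩]
    · rw [if_neg hco, if_neg]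
      intro ⟨hne, h1, h2⟩
      exact hco ⟨hne, hiff.mpr ⟨h1, h2⟩⟩
  · rw [if_neg hc, if_neg hc, add_zero, if_neg]
    intro ⟨_, hy⟩
    apply hc
    intro i h1 h2
    rw [hy, flipP_other _ _ _ h1 h2]
lemma bond_mulVec {m : ℕ} (j : Fin (m - 1)) (ψ : (Fin m → Fin 2) → ℂ)
    (x : Fin m → Fin 2) :
    ((nnXX m j + nnYY m j) *ᵥ ψ) x =
      if x (jL j) = x (jR j) then 0 else 2 * ψ (flipP m j x) := by
  classical
  have : ((nnXX m j + nnYY m j) *ᵥ ψ) x = ∑ y, (nnXX m j + nnYY m j) x y * ψ y := rfl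
  rw [this]
  have : ∀ y, (nnXX m j + nnYY m j) x y * ψ y =
      if y = flipP m j x then (if x (jL j) = x (jR j) then 0 else 2 * ψ (flipP m j x)) else 0 := by
    intro y
    rw [bond_apply]
    by_cases hy : y = flipP m j x
    · rw [if_pos hy]
      by_cases hne : x (jL j) = x (jR j)
      · rw [if_neg (by tauto), if_pos hne, zero_mul]
      · rw [if_pos ⟨hne, hy⟩, if_neg hne, hy]
    · rw [if_neg (by tauto), if_neg hy, zero_mul]
  rw [Finset.sum_congr rfl fun y _ => this y, Finset.sum_ite_eq' Finset.univ]
  simp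

/-- value of `σᶻ` eigenvalue as `ℂ`. -/
def zv (a : Fin 2) : ℂ := if a = 0 then 1 else -1

lemma pauliZ_diag (a : Fin 2) : pauliZ a a = zv a := by
  fin_cases a <;> simp [pauliZ, zv]

lemma pauliZ_offdiag {a b : Fin 2} (h : a ≠ b) : pauliZ a b = 0 := by
  fin_cases a <;> fin_cases b <;> simp_all [pauliZ]

lemma liftZ_mulVec {m : ℕ} (p : Fin m) (ψ : (Fin m → Fin 2) → ℂ) (x : Fin m → Fin 2) :
    (liftAt m p pauliZ *ᵥ ψ) x = zv (x p) * ψ x := by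
  classical
  have h0 : (liftAt m p pauliZ *ᵥ ψ) x = ∑ y, liftAt m p pauliZ x y * ψ y := rfl
  rw [h0]
  have key : ∀ y, liftAt m p pauliZ x y * ψ y = if y = x then zv (x p) * ψ x else 0 := by
    intro y
    simp only [liftAt, Matrix.of_apply]
    by_cases hy : y = x
    · subst hy
      rw [if_pos rfl, if_pos (fun i _ => rfl), pauliZ_diag]
    · rw [if_neg hy]
      by_cases hc : ∀ i, i ≠ p → x i = y i
      · rw [if_pos hc]
        have hne : x p ≠ y p := by
          intro he
          apply hy; funext i
          by_cases hip : i = p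
          · rw [hip]; exact he.symm
          · exact (hc i hip).symm
        rw [pauliZ_offdiag hne, zero_mul]
      · rw [if_neg hc, zero_mul]
  rw [Finset.sum_congr rfl fun y _ => key y, Finset.sum_ite_eq' Finset.univ]
  simp

lemma zv_norm (a : Fin 2) : ‖zv a‖ = 1 := by
  fin_cases a <;> simp [zv]

/-! ### Hermitian structure -/

lemma liftAt_conjTranspose {m : ℕ} (p : Fin m) (A : Matrix (Fin 2) (Fin 2) ℂ) :
    (liftAt m p A)ᴴ = liftAt m p Aᴴ := by
  ext x y
  rw [Matrix.conjTranspose_apply]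
  simp only [liftAt, Matrix.of_apply]
  by_cases h : ∀ i, i ≠ p → x i = y i
  · have h' : ∀ i, i ≠ p → y i = x i := fun i hi => (h i hi).symm
    rw [if_pos h, if_pos h', Matrix.conjTranspose_apply]
  · have h' : ¬ ∀ i, i ≠ p → y i = x i := by
      intro h'; exact h fun i hi => (h' i hi).symm
    rw [if_neg h, if_neg h', star_zero]

lemma liftAt_comm {m : ℕ} {p q : Fin m} (hpq : p ≠ q) (A B : Matrix (Fin 2) (Fin 2) ℂ) :
    liftAt m p A * liftAt m q B = liftAt m q B * liftAt m p A := by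
  ext x y
  rw [liftAt_mul_apply p q hpq, liftAt_mul_apply q p hpq.symm]
  rw [if_congr (Iff.intro (fun h i h1 h2 => h i h2 h1) (fun h i h1 h2 => h i h2 h1)) rfl rfl]
  by_cases h : ∀ i, i ≠ q → i ≠ p → x i = y i
  · rw [if_pos h, if_pos h, mul_comm]
  · rw [if_neg h, if_neg h]

lemma pauliX_herm : pauliXᴴ = pauliX := by
  ext i j; fin_cases i <;> fin_cases j <;> simp [pauliX]

lemma pauliY_herm : pauliYᴴ = pauliY := by
  ext i j; fin_cases i <;> fin_cases j <;> simp [pauliY]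

lemma pauliZ_herm : pauliZᴴ = pauliZ := by
  ext i j; fin_cases i <;> fin_cases j <;> simp [pauliZ]

lemma nnXX_herm {m : ℕ} (j : Fin (m - 1)) : (nnXX m j)ᴴ = nnXX m j := by
  show (liftAt m (jL j) pauliX * liftAt m (jR j) pauliX)ᴴ = _
  rw [Matrix.conjTranspose_mul, liftAt_conjTranspose, liftAt_conjTranspose, pauliX_herm,
    liftAt_comm (jL_ne_jR j).symm]
  rfl

lemma nnYY_herm {m : ℕ} (j : Fin (m - 1)) : (nnYY m j)ᴴ = nnYY m j := by
  show (liftAt m (jL j) pauliY * liftAt m (jR j) pauliY)ᴴ = _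
  rw [Matrix.conjTranspose_mul, liftAt_conjTranspose, liftAt_conjTranspose, pauliY_herm,
    liftAt_comm (jL_ne_jR j).symm]
  rfl

/-- the middle bond, as an element of `Fin (2*n-1)`. -/
def j0 (n : ℕ) (hn : 1 ≤ n) : Fin (2 * n - 1) := ⟨n - 1, by omega⟩

lemma midXXYY_eq (n : ℕ) (hn : 1 ≤ n) :
    midXXYY n = nnXX (2 * n) (j0 n hn) + nnYY (2 * n) (j0 n hn) := by
  classical
  rw [midXXYY]
  rw [Finset.sum_eq_single (j0 n hn)]
  · rw [if_pos (show ((j0 n hn : ℕ)) = n - 1 from rfl)]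
  · intro j _ hj
    rw [if_neg]
    intro h
    exact hj (Fin.ext (by simp [j0, h]))
  · intro h; exact absurd (Finset.mem_univ _) h

lemma midZdiff_eq (n : ℕ) (hn : 1 ≤ n) :
    midZdiff n = liftAt (2 * n) (jL (j0 n hn)) pauliZ - liftAt (2 * n) (jR (j0 n hn)) pauliZ := by
  classical
  rw [midZdiff]
  rw [Finset.sum_eq_single (j0 n hn)]
  · rw [if_pos (show ((j0 n hn : ℕ)) = n - 1 from rfl)]; rfl
  · intro j _ hj
    rw [if_neg]
    intro h
    exact hj (Fin.ext (by simp [j0, h]))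
  · intro h; exact absurd (Finset.mem_univ _) h

lemma xxH_isHermitian (n : ℕ) (hn : 1 ≤ n) (lam : ℝ) : (xxH n lam).IsHermitian := by
  have hmidXY : (midXXYY n)ᴴ = midXXYY n := by
    rw [midXXYY_eq n hn, Matrix.conjTranspose_add, nnXX_herm, nnYY_herm]
  have hmidZ : (midZdiff n)ᴴ = midZdiff n := by
    rw [midZdiff_eq n hn, Matrix.conjTranspose_sub, liftAt_conjTranspose, liftAt_conjTranspose,
      pauliZ_herm]
  unfold Matrix.IsHermitian
  rw [xxH, Matrix.conjTranspose_sub, Matrix.conjTranspose_add, Matrix.conjTranspose_smul,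
    Matrix.conjTranspose_smul, hmidXY, hmidZ, Matrix.conjTranspose_sum]
  congr 1
  · congr 2
    · simp [Complex.ext_iff]
    · simp [Complex.ext_iff]
  · refine Finset.sum_congr rfl fun j _ => ?_
    rw [Matrix.conjTranspose_add, nnXX_herm, nnYY_herm]

/-! ### The action of `H` on vectors -/

lemma sum_mulVec' {ι : Type*} [Fintype ι] {α : Type*} (s : Finset α)
    (f : α → Matrix ι ι ℂ) (v : ι → ℂ) :
    (∑ a ∈ s, f a) *ᵥ v = ∑ a ∈ s, f a *ᵥ v := by
  classical
  induction s using Finset.induction with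
  | empty => simp [Matrix.zero_mulVec]
  | insert _ _ ha ih => rw [Finset.sum_insert ha, Finset.sum_insert ha, Matrix.add_mulVec, ih]

lemma xxH_mulVec (n : ℕ) (hn : 1 ≤ n) (lam : ℝ) (ψ : (Fin (2 * n) → Fin 2) → ℂ) :
    xxH n lam *ᵥ ψ =
      ((1 : ℂ) - lam) • ((nnXX (2 * n) (j0 n hn) + nnYY (2 * n) (j0 n hn)) *ᵥ ψ)
        + (Real.sqrt (1 - lam ^ 2) : ℂ) •
            ((liftAt (2 * n) (jL (j0 n hn)) pauliZ *ᵥ ψ)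
              - (liftAt (2 * n) (jR (j0 n hn)) pauliZ *ᵥ ψ))
        - ∑ j : Fin (2 * n - 1), ((nnXX (2 * n) j + nnYY (2 * n) j) *ᵥ ψ) := by
  rw [xxH, Matrix.sub_mulVec, Matrix.add_mulVec, Matrix.smul_mulVec,
    Matrix.smul_mulVec, midXXYY_eq n hn, midZdiff_eq n hn, Matrix.sub_mulVec,
    sum_mulVec']

/-! ### Windows -/

/-- The domain-wall configuration. -/
def x0 (n : ℕ) : Fin (2 * n) → Fin 2 := fun i => if (i : ℕ) < n then 0 else 1

/-- `ψ` is supported on configurations agreeing with the domain wall outside the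
window of radius `k` around the middle cut. -/
def inWin (n k : ℕ) (ψ : (Fin (2 * n) → Fin 2) → ℂ) : Prop :=
  ∀ x, ψ x ≠ 0 → ∀ i : Fin (2 * n), ((i : ℕ) + k < n ∨ n + k ≤ (i : ℕ)) → x i = x0 n i

lemma dwState_eq (n : ℕ) (x : Fin (2 * n) → Fin 2) :
    dwState n x = if x = x0 n then 1 else 0 := by
  rw [dwState]
  congr 1
  simp only [eq_iff_iff]
  constructor
  · intro h
    funext i
    have := h i
    apply Fin.ext
    rw [this, x0]
    split <;> rfl
  · intro h i
    rw [h, x0]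
    split <;> rfl

lemma inWin_dw (n : ℕ) : inWin n 0 (dwState n) := by
  intro x hx i _
  rw [dwState_eq] at hx
  by_cases h : x = x0 n
  · rw [h]
  · rw [if_neg h] at hx; exact absurd rfl hx

lemma inWin_mono {n k k' : ℕ} (hk : k ≤ k') {ψ : (Fin (2 * n) → Fin 2) → ℂ}
    (h : inWin n k ψ) : inWin n k' ψ := by
  intro x hx i hi
  exact h x hx i (by omega)

lemma inWin_smul {n k : ℕ} (c : ℂ) {ψ : (Fin (2 * n) → Fin 2) → ℂ}
    (h : inWin n k ψ) : inWin n k (c • ψ) := by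
  intro x hx i hi
  apply h x _ i hi
  intro h0
  exact hx (by simp [h0])

lemma inWin_add {n k : ℕ} {φ ψ : (Fin (2 * n) → Fin 2) → ℂ}
    (hφ : inWin n k φ) (hψ : inWin n k ψ) : inWin n k (φ + ψ) := by
  intro x hx i hi
  by_cases h : φ x ≠ 0
  · exact hφ x h i hi
  · push_neg at h
    apply hψ x _ i hi
    intro h0
    exact hx (by simp [Pi.add_apply, h, h0])

lemma inWin_zero {n k : ℕ} : inWin n k (0 : (Fin (2 * n) → Fin 2) → ℂ) := by
  intro x hx; exact absurd rfl hx

lemma inWin_neg {n k : ℕ} {ψ : (Fin (2 * n) → Fin 2) → ℂ}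
    (h : inWin n k ψ) : inWin n k (-ψ) := by
  intro x hx i hi
  apply h x _ i hi
  intro h0
  exact hx (by simp [h0])

lemma inWin_sub {n k : ℕ} {φ ψ : (Fin (2 * n) → Fin 2) → ℂ}
    (hφ : inWin n k φ) (hψ : inWin n k ψ) : inWin n k (φ - ψ) := by
  rw [sub_eq_add_neg]; exact inWin_add hφ (inWin_neg hψ)

lemma inWin_sum {n k : ℕ} {α : Type*} (s : Finset α) (f : α → (Fin (2 * n) → Fin 2) → ℂ)
    (h : ∀ a ∈ s, inWin n k (f a)) : inWin n k (∑ a ∈ s, f a) := by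
  classical
  induction s using Finset.induction with
  | empty => simpa using inWin_zero
  | insert _ _ ha ih =>
      rw [Finset.sum_insert ha]
      exact inWin_add (h _ (Finset.mem_insert_self _ _))
        (ih fun a has => h a (Finset.mem_insert_of_mem has))

/-! ### Window mapping and norm bounds for the bond operators -/

lemma inWin_bond {n k : ℕ} (j : Fin (2 * n - 1)) {ψ : (Fin (2 * n) → Fin 2) → ℂ}
    (h : inWin n k ψ) : inWin n (k + 1) ((nnXX (2 * n) j + nnYY (2 * n) j) *ᵥ ψ) := by
  intro x hx i hi
  rw [bond_mulVec] at hx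
  by_cases hee : x (jL j) = x (jR j)
  · rw [if_pos hee] at hx; exact absurd rfl hx
  · rw [if_neg hee] at hx
    have hψ : ψ (flipP (2 * n) j x) ≠ 0 := by
      intro h0; exact hx (by rw [h0, mul_zero])
    have hL : ((jL j : ℕ)) = (j : ℕ) := rfl
    have hR : ((jR j : ℕ)) = (j : ℕ) + 1 := rfl
    by_cases hiL : i = jL j
    · -- x i = flipP x (jR j) = x0 (jR j), and x0 (jR j) = x0 (jL j)
      have h1 : flipP (2 * n) j x (jR j) = x0 n (jR j) := by
        apply h _ hψ
        rw [hR]; subst hiL; rw [hL] at hi; omega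
      rw [flipP_jR] at h1
      have h2 : x0 n (jR j) = x0 n (jL j) := by
        subst hiL
        rw [hL] at hi
        simp only [x0, hL, hR]
        rcases hi with hi | hi
        · rw [if_pos (by omega), if_pos (by omega)]
        · rw [if_neg (by omega), if_neg (by omega)]
      rw [hiL, h1, h2]
    · by_cases hiR : i = jR j
      · have h1 : flipP (2 * n) j x (jL j) = x0 n (jL j) := by
          apply h _ hψ
          rw [hL]; subst hiR; rw [hR] at hi; omega
        rw [flipP_jL] at h1
        have h2 : x0 n (jL j) = x0 n (jR j) := by
          subst hiR
          rw [hR] at hi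
          simp only [x0, hL, hR]
          rcases hi with hi | hi
          · rw [if_pos (by omega), if_pos (by omega)]
          · rw [if_neg (by omega), if_neg (by omega)]
        rw [hiR, h1, h2]
      · have h1 : flipP (2 * n) j x i = x0 n i := by
          apply h _ hψ
          omega
        rw [flipP_other _ _ _ hiL hiR] at h1
        exact h1

lemma bond_zero {n k : ℕ} (j : Fin (2 * n - 1)) {ψ : (Fin (2 * n) → Fin 2) → ℂ}
    (h : inWin n k ψ) (hj : (j : ℕ) + 1 + k < n ∨ n + k ≤ (j : ℕ)) :
    (nnXX (2 * n) j + nnYY (2 * n) j) *ᵥ ψ = 0 := by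
  funext x
  rw [Pi.zero_apply, bond_mulVec]
  by_cases hee : x (jL j) = x (jR j)
  · rw [if_pos hee]
  · rw [if_neg hee]
    by_cases hψ : ψ (flipP (2 * n) j x) = 0
    · rw [hψ, mul_zero]
    · exfalso
      have hL : ((jL j : ℕ)) = (j : ℕ) := rfl
      have hR : ((jR j : ℕ)) = (j : ℕ) + 1 := rfl
      have h1 : flipP (2 * n) j x (jL j) = x0 n (jL j) := h _ hψ _ (by omega)
      have h2 : flipP (2 * n) j x (jR j) = x0 n (jR j) := h _ hψ _ (by omega)
      rw [flipP_jL] at h1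
      rw [flipP_jR] at h2
      have h3 : x0 n (jL j) = x0 n (jR j) := by
        simp only [x0, hL, hR]
        rcases hj with hj | hj
        · rw [if_pos (by omega), if_pos (by omega)]
        · rw [if_neg (by omega), if_neg (by omega)]
      exact hee (h2.trans (h3.symm.trans h1.symm))

lemma sqrt_four : Real.sqrt 4 = 2 := by
  rw [show (4 : ℝ) = 2 ^ 2 by norm_num, Real.sqrt_sq (by norm_num)]

lemma bond_norm {n : ℕ} (j : Fin (2 * n - 1)) (ψ : (Fin (2 * n) → Fin 2) → ℂ) :
    evNorm ((nnXX (2 * n) j + nnYY (2 * n) j) *ᵥ ψ) ≤ 2 * evNorm ψ := by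
  have e : (2 : ℝ) = Real.sqrt 4 := sqrt_four.symm
  rw [evNorm, evNorm, e, ← Real.sqrt_mul (by norm_num)]
  apply Real.sqrt_le_sqrt
  have key : ∀ x, ‖((nnXX (2 * n) j + nnYY (2 * n) j) *ᵥ ψ) x‖ ^ 2
      ≤ 4 * ‖ψ (flipP (2 * n) j x)‖ ^ 2 := by
    intro x
    rw [bond_mulVec]
    by_cases hee : x (jL j) = x (jR j)
    · rw [if_pos hee]; simp
    · rw [if_neg hee, norm_mul]
      have : ‖(2 : ℂ)‖ = 2 := by norm_num
      rw [this, mul_pow]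
      norm_num
  calc ∑ x, ‖((nnXX (2 * n) j + nnYY (2 * n) j) *ᵥ ψ) x‖ ^ 2
      ≤ ∑ x, 4 * ‖ψ (flipP (2 * n) j x)‖ ^ 2 := Finset.sum_le_sum fun x _ => key x
    _ = 4 * ∑ x, ‖ψ (flipP (2 * n) j x)‖ ^ 2 := by rw [Finset.mul_sum]
    _ = 4 * ∑ x, ‖ψ x‖ ^ 2 := by
        congr 1
        exact Equiv.sum_comp ⟨flipP (2 * n) j, flipP (2 * n) j,
          flipP_flipP j, flipP_flipP j⟩ (fun y => ‖ψ y‖ ^ 2)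

lemma liftZ_norm {n : ℕ} (p : Fin (2 * n)) (ψ : (Fin (2 * n) → Fin 2) → ℂ) :
    evNorm (liftAt (2 * n) p pauliZ *ᵥ ψ) ≤ 1 * evNorm ψ := by
  apply evNorm_le_of_pointwise (by norm_num)
  intro x
  rw [liftZ_mulVec, norm_mul, zv_norm, one_mul]

lemma inWin_liftZ {n k : ℕ} (p : Fin (2 * n)) {ψ : (Fin (2 * n) → Fin 2) → ℂ}
    (h : inWin n k ψ) : inWin n k (liftAt (2 * n) p pauliZ *ᵥ ψ) := by
  intro x hx i hi
  rw [liftZ_mulVec] at hx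
  apply h x _ i hi
  intro h0
  exact hx (by rw [h0, mul_zero])

/-! ### The key step estimate -/

lemma active_card (n k : ℕ) :
    (Finset.univ.filter fun j : Fin (2 * n - 1) =>
        ¬((j : ℕ) + 1 + k < n ∨ n + k ≤ (j : ℕ))).card ≤ 2 * k + 1 := by
  classical
  have h := Finset.card_le_card_of_injOn (f := fun j : Fin (2 * n - 1) => (j : ℕ) + 1 + k - n)
    (s := Finset.univ.filter fun j : Fin (2 * n - 1) =>
        ¬((j : ℕ) + 1 + k < n ∨ n + k ≤ (j : ℕ)))
    (t := Finset.range (2 * k + 1))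
    (fun j hj => by
      simp only [Finset.mem_coe, Finset.mem_filter, Finset.mem_univ, true_and] at hj
      have : ((j : ℕ) + 1 + k - n) < 2 * k + 1 := by omega
      simpa [Finset.mem_range] using this)
    (fun j1 h1 j2 h2 he => by
      simp only [Finset.mem_coe, Finset.mem_filter, Finset.mem_univ, true_and] at h1 h2
      apply Fin.ext
      have he' : (j1 : ℕ) + 1 + k - n = (j2 : ℕ) + 1 + k - n := he
      omega)
  calc _ ≤ (Finset.range (2 * k + 1)).card := h
    _ = 2 * k + 1 := Finset.card_range _

lemma sum_bond_norm {n k : ℕ} {ψ : (Fin (2 * n) → Fin 2) → ℂ} (h : inWin n k ψ) :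
    evNorm (∑ j : Fin (2 * n - 1), ((nnXX (2 * n) j + nnYY (2 * n) j) *ᵥ ψ))
      ≤ (2 * k + 1) * (2 * evNorm ψ) := by
  classical
  set act := Finset.univ.filter fun j : Fin (2 * n - 1) =>
    ¬((j : ℕ) + 1 + k < n ∨ n + k ≤ (j : ℕ)) with hact
  calc evNorm (∑ j : Fin (2 * n - 1), ((nnXX (2 * n) j + nnYY (2 * n) j) *ᵥ ψ))
      ≤ ∑ j : Fin (2 * n - 1), evNorm ((nnXX (2 * n) j + nnYY (2 * n) j) *ᵥ ψ) :=
        evNorm_sum_le _ _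
    _ = ∑ j ∈ act, evNorm ((nnXX (2 * n) j + nnYY (2 * n) j) *ᵥ ψ) := by
        symm
        apply Finset.sum_subset (Finset.subset_univ _)
        intro j _ hj
        rw [hact] at hj
        simp only [Finset.mem_filter, Finset.mem_univ, true_and, not_not] at hj
        rw [bond_zero j h hj, evNorm_zero]
    _ ≤ ∑ _j ∈ act, (2 * evNorm ψ) := by
        apply Finset.sum_le_sum
        intro j _
        exact bond_norm j ψ
    _ = act.card * (2 * evNorm ψ) := by rw [Finset.sum_const, nsmul_eq_mul]
    _ ≤ (2 * k + 1) * (2 * evNorm ψ) := by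
        apply mul_le_mul_of_nonneg_right _ (mul_nonneg (by norm_num) (evNorm_nonneg ψ))
        exact_mod_cast active_card n k

lemma norm4 {ι : Type*} [Fintype ι] {v1 v2 v3 v4 : ι → ℂ} {a1 a2 a3 a4 : ℝ}
    (h1 : evNorm v1 ≤ a1) (h2 : evNorm v2 ≤ a2) (h3 : evNorm v3 ≤ a3)
    (h4 : evNorm v4 ≤ a4) :
    evNorm (v1 + v2 - v3 - v4) ≤ a1 + a2 + a3 + a4 := by
  have e1 := evNorm_sub_le (v1 + v2 - v3) v4
  have e2 := evNorm_sub_le (v1 + v2) v3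
  have e3 := evNorm_add_le v1 v2
  linarith

lemma step_estimate (n : ℕ) (hn : 1 ≤ n) (lam : ℝ) (hl0 : 0 ≤ lam) (hl1 : lam ≤ 1)
    (k : ℕ) {ψ : (Fin (2 * n) → Fin 2) → ℂ} (h : inWin n k ψ) :
    inWin n (k + 1)
        ((xxH n lam - ((2 * Real.sqrt (1 - lam ^ 2) : ℝ) : ℂ) • 1) *ᵥ ψ) ∧
      evNorm ((xxH n lam - ((2 * Real.sqrt (1 - lam ^ 2) : ℝ) : ℂ) • 1) *ᵥ ψ)
        ≤ (8 * (k + 1)) * evNorm ψ := by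
  set s : ℝ := Real.sqrt (1 - lam ^ 2) with hs
  have hs0 : 0 ≤ s := Real.sqrt_nonneg _
  have hs1 : s ≤ 1 := by
    rw [hs]
    calc Real.sqrt (1 - lam ^ 2) ≤ Real.sqrt 1 := Real.sqrt_le_sqrt (by nlinarith)
      _ = 1 := Real.sqrt_one
  have hGv : (xxH n lam - ((2 * s : ℝ) : ℂ) • 1) *ᵥ ψ
      = xxH n lam *ᵥ ψ - ((2 * s : ℝ) : ℂ) • ψ := by
    rw [Matrix.sub_mulVec, Matrix.smul_mulVec, Matrix.one_mulVec]
  rw [hGv, xxH_mulVec n hn lam]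
  constructor
  · apply inWin_sub
    apply inWin_sub
    · apply inWin_add
      · exact inWin_smul _ (inWin_bond _ h)
      · apply inWin_smul
        exact inWin_mono (Nat.le_succ k) (inWin_sub (inWin_liftZ _ h) (inWin_liftZ _ h))
    · apply inWin_sum
      intro j _
      exact inWin_bond _ h
    · exact inWin_mono (Nat.le_succ k) (inWin_smul _ h)
  · have N0 : 0 ≤ evNorm ψ := evNorm_nonneg ψ
    have h1 : ‖((1 : ℂ) - lam)‖ ≤ 1 := by
      rw [show ((1 : ℂ) - lam) = ((1 - lam : ℝ) : ℂ) by push_cast; ring,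
        Complex.norm_real, Real.norm_eq_abs, abs_of_nonneg (by linarith)]
      linarith
    have h2 : ‖((s : ℝ) : ℂ)‖ ≤ 1 := by
      rw [Complex.norm_real, Real.norm_eq_abs, abs_of_nonneg hs0]; exact hs1
    have h3 : ‖(((2 * s : ℝ)) : ℂ)‖ ≤ 2 := by
      rw [Complex.norm_real, Real.norm_eq_abs, abs_of_nonneg (by linarith)]; linarith
    have t1 : evNorm (((1 : ℂ) - lam) •
        ((nnXX (2 * n) (j0 n hn) + nnYY (2 * n) (j0 n hn)) *ᵥ ψ)) ≤ 2 * evNorm ψ := by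
      rw [evNorm_smul]
      calc ‖((1 : ℂ) - lam)‖ * evNorm ((nnXX (2 * n) (j0 n hn) + nnYY (2 * n) (j0 n hn)) *ᵥ ψ)
          ≤ 1 * (2 * evNorm ψ) :=
            mul_le_mul h1 (bond_norm _ ψ) (evNorm_nonneg _) (by norm_num)
        _ = 2 * evNorm ψ := by ring
    have t2 : evNorm (((s : ℝ) : ℂ) •
        ((liftAt (2 * n) (jL (j0 n hn)) pauliZ *ᵥ ψ)
          - (liftAt (2 * n) (jR (j0 n hn)) pauliZ *ᵥ ψ))) ≤ 2 * evNorm ψ := by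
      rw [evNorm_smul]
      have hsub := evNorm_sub_le (liftAt (2 * n) (jL (j0 n hn)) pauliZ *ᵥ ψ)
        (liftAt (2 * n) (jR (j0 n hn)) pauliZ *ᵥ ψ)
      have hZ1 := liftZ_norm (jL (j0 n hn)) ψ
      have hZ2 := liftZ_norm (jR (j0 n hn)) ψ
      calc ‖((s : ℝ) : ℂ)‖ * evNorm _ ≤ 1 * (2 * evNorm ψ) :=
            mul_le_mul h2 (by linarith) (evNorm_nonneg _) (by norm_num)
        _ = 2 * evNorm ψ := by ring
    have t3 := sum_bond_norm h
    have t4 : evNorm (((2 * s : ℝ) : ℂ) • ψ) ≤ 2 * evNorm ψ := by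
      rw [evNorm_smul]
      exact mul_le_mul_of_nonneg_right h3 N0
    have := norm4 t1 t2 t3 t4
    have hk : (0 : ℝ) ≤ (k : ℝ) := Nat.cast_nonneg k
    calc evNorm _ ≤ 2 * evNorm ψ + 2 * evNorm ψ + (2 * ↑k + 1) * (2 * evNorm ψ)
          + 2 * evNorm ψ := this
      _ ≤ (8 * (k + 1)) * evNorm ψ := by nlinarith

/-! ### Iterated moments -/

lemma dwState_cinner (n : ℕ) : cinner (dwState n) (dwState n) = 1 := by
  classical
  rw [cinner]
  have key : ∀ x, (starRingEnd ℂ) (dwState n x) * (dwState n x)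
      = if x = x0 n then 1 else 0 := by
    intro x
    by_cases h : x = x0 n
    · simp [dwState_eq, h]
    · simp [dwState_eq, h]
  rw [Finset.sum_congr rfl fun x _ => key x, Finset.sum_ite_eq' Finset.univ]
  simp

lemma dwState_evNorm (n : ℕ) : evNorm (dwState n) = 1 := by
  have h := cinner_self_re (dwState n)
  rw [dwState_cinner] at h
  have h2 : evNorm (dwState n) ^ 2 = 1 := by simpa using h.symm
  nlinarith [evNorm_nonneg (dwState n)]

lemma moment_bound (n : ℕ) (hn : 1 ≤ n) (lam : ℝ) (hl0 : 0 ≤ lam) (hl1 : lam ≤ 1) (k : ℕ) :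
    evNorm ((xxH n lam - ((2 * Real.sqrt (1 - lam ^ 2) : ℝ) : ℂ) • 1) ^ k *ᵥ dwState n)
      ≤ 8 ^ k * (Nat.factorial k) := by
  set G := xxH n lam - ((2 * Real.sqrt (1 - lam ^ 2) : ℝ) : ℂ) • 1 with hG
  suffices h : ∀ k : ℕ, inWin n k (G ^ k *ᵥ dwState n) ∧
      evNorm (G ^ k *ᵥ dwState n) ≤ 8 ^ k * (Nat.factorial k) by
    exact (h k).2
  intro k
  induction k with
  | zero =>
      rw [pow_zero, Matrix.one_mulVec]
      exact ⟨inWin_dw n, by rw [dwState_evNorm]; norm_num⟩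
  | succ k ih =>
      have hGs : G ^ (k + 1) *ᵥ dwState n = G *ᵥ (G ^ k *ᵥ dwState n) := by
        rw [Matrix.mulVec_mulVec, ← pow_succ']
      obtain ⟨hwin, hnorm⟩ := ih
      obtain ⟨hwin', hnorm'⟩ := step_estimate n hn lam hl0 hl1 k hwin
      rw [hGs]
      refine ⟨hwin', ?_⟩
      calc evNorm (G *ᵥ (G ^ k *ᵥ dwState n)) ≤ (8 * (k + 1)) * evNorm (G ^ k *ᵥ dwState n) :=
            hnorm'
        _ ≤ (8 * (k + 1)) * (8 ^ k * (Nat.factorial k)) := by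
            apply mul_le_mul_of_nonneg_left hnorm (by positivity)
        _ = 8 ^ (k + 1) * (Nat.factorial (k + 1)) := by
            rw [Nat.factorial_succ]
            push_cast
            ring

/-! ### Spectral representation -/

section Spectral

variable {ι : Type*} [Fintype ι] [DecidableEq ι]

lemma conj_mul_self (z : ℂ) : (starRingEnd ℂ) z * z = ((‖z‖ ^ 2 : ℝ) : ℂ) := by
  rw [mul_comm, Complex.mul_conj']
  norm_cast

lemma quadform {H : Matrix ι ι ℂ} (hH : H.IsHermitian) (φ : ι → ℂ) (d : ι → ℂ) :
    cinner φ (((hH.eigenvectorUnitary : Matrix ι ι ℂ) * Matrix.diagonal d *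
        star (hH.eigenvectorUnitary : Matrix ι ι ℂ)) *ᵥ φ)
      = ∑ j, d j * ((‖(star (hH.eigenvectorUnitary : Matrix ι ι ℂ) *ᵥ φ) j‖ ^ 2 : ℝ) : ℂ) := by
  set U := (hH.eigenvectorUnitary : Matrix ι ι ℂ) with hU
  set c := star U *ᵥ φ with hc
  have h1 : (U * Matrix.diagonal d * star U) *ᵥ φ = U *ᵥ (Matrix.diagonal d *ᵥ c) := by
    rw [hc, Matrix.mulVec_mulVec, Matrix.mulVec_mulVec]
  rw [cinner_eq_dot, h1, Matrix.dotProduct_mulVec]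
  have h2 : star φ ᵥ* U = star c := by
    rw [hc, Matrix.star_mulVec, Matrix.star_eq_conjTranspose, Matrix.conjTranspose_conjTranspose]
  rw [h2]
  rw [dotProduct]
  refine Finset.sum_congr rfl fun j _ => ?_
  rw [Matrix.mulVec_diagonal, Pi.star_apply]
  rw [show star (c j) = (starRingEnd ℂ) (c j) from rfl]
  rw [← mul_assoc, mul_comm ((starRingEnd ℂ) (c j)) (d j), mul_assoc, conj_mul_self]

lemma UU_star {H : Matrix ι ι ℂ} (hH : H.IsHermitian) :
    (hH.eigenvectorUnitary : Matrix ι ι ℂ) * star (hH.eigenvectorUnitary : Matrix ι ι ℂ) = 1 :=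
  (Matrix.mem_unitaryGroup_iff).mp hH.eigenvectorUnitary.2

lemma U_starU {H : Matrix ι ι ℂ} (hH : H.IsHermitian) :
    star (hH.eigenvectorUnitary : Matrix ι ι ℂ) * (hH.eigenvectorUnitary : Matrix ι ι ℂ) = 1 :=
  (Matrix.mem_unitaryGroup_iff').mp hH.eigenvectorUnitary.2

lemma sum_w_one {H : Matrix ι ι ℂ} (hH : H.IsHermitian) (φ : ι → ℂ)
    (hφ : cinner φ φ = 1) :
    ∑ j, (‖(star (hH.eigenvectorUnitary : Matrix ι ι ℂ) *ᵥ φ) j‖ ^ 2 : ℝ) = 1 := by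
  have h := quadform hH φ (fun _ => 1)
  rw [Matrix.diagonal_one, mul_one, UU_star hH, Matrix.one_mulVec, hφ] at h
  have h' := h.symm
  simp only [one_mul] at h'
  have h2 : ((∑ j, (‖(star (hH.eigenvectorUnitary : Matrix ι ι ℂ) *ᵥ φ) j‖ ^ 2 : ℝ) : ℝ) : ℂ)
      = 1 := by
    push_cast at h' ⊢
    exact h'
  exact_mod_cast h2

lemma conj_diag {H : Matrix ι ι ℂ} (hH : H.IsHermitian) (d e : ι → ℂ) :
    ((hH.eigenvectorUnitary : Matrix ι ι ℂ) * Matrix.diagonal d *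
        star (hH.eigenvectorUnitary : Matrix ι ι ℂ)) *
      ((hH.eigenvectorUnitary : Matrix ι ι ℂ) * Matrix.diagonal e *
        star (hH.eigenvectorUnitary : Matrix ι ι ℂ))
    = (hH.eigenvectorUnitary : Matrix ι ι ℂ) * Matrix.diagonal (d * e) *
        star (hH.eigenvectorUnitary : Matrix ι ι ℂ) := by
  set U := (hH.eigenvectorUnitary : Matrix ι ι ℂ) with hU
  calc (U * Matrix.diagonal d * star U) * (U * Matrix.diagonal e * star U)
      = U * Matrix.diagonal d * (star U * U) * Matrix.diagonal e * star U := by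
        simp only [Matrix.mul_assoc]
    _ = U * (Matrix.diagonal d * Matrix.diagonal e) * star U := by
        rw [U_starU hH]
        simp only [Matrix.mul_assoc, Matrix.one_mul]
    _ = U * Matrix.diagonal (d * e) * star U := by
        rw [Matrix.diagonal_mul_diagonal]
        rfl

lemma conj_diag_pow {H : Matrix ι ι ℂ} (hH : H.IsHermitian) (d : ι → ℂ) (k : ℕ) :
    ((hH.eigenvectorUnitary : Matrix ι ι ℂ) * Matrix.diagonal d *
        star (hH.eigenvectorUnitary : Matrix ι ι ℂ)) ^ k
    = (hH.eigenvectorUnitary : Matrix ι ι ℂ) * Matrix.diagonal (d ^ k) *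
        star (hH.eigenvectorUnitary : Matrix ι ι ℂ) := by
  induction k with
  | zero =>
      rw [pow_zero, pow_zero]
      rw [show ((1 : ι → ℂ)) = fun _ => (1 : ℂ) from rfl]
      rw [Matrix.diagonal_one, mul_one, UU_star hH]
  | succ k ih =>
      rw [pow_succ, ih, conj_diag hH, ← pow_succ]

lemma G_diag {H : Matrix ι ι ℂ} (hH : H.IsHermitian) (E : ℝ) :
    H - ((E : ℂ) • 1)
      = (hH.eigenvectorUnitary : Matrix ι ι ℂ) *
          Matrix.diagonal (fun j => ((hH.eigenvalues j - E : ℝ) : ℂ)) *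
          star (hH.eigenvectorUnitary : Matrix ι ι ℂ) := by
  set U := (hH.eigenvectorUnitary : Matrix ι ι ℂ) with hU
  have h1 : ((E : ℂ) • 1 : Matrix ι ι ℂ) = U * Matrix.diagonal (fun _ => (E : ℂ)) * star U := by
    have : Matrix.diagonal (fun _ : ι => (E : ℂ)) = (E : ℂ) • 1 :=
      (Matrix.smul_one_eq_diagonal _).symm
    rw [this, Matrix.mul_smul, Matrix.smul_mul, mul_one, UU_star hH]
  conv_lhs => rw [hH.spectral_theorem, Unitary.conjStarAlgAut_apply, ← hU, h1]
  rw [← Matrix.sub_mul, ← Matrix.mul_sub, Matrix.diagonal_sub]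
  congr 1
  congr 1
  congr 1
  funext j
  simp [Function.comp]

lemma moment_form {H : Matrix ι ι ℂ} (hH : H.IsHermitian) (φ : ι → ℂ) (E : ℝ) (k : ℕ) :
    evNorm ((H - ((E : ℂ) • 1)) ^ k *ᵥ φ) ^ 2
      = ∑ j, (hH.eigenvalues j - E) ^ (2 * k) *
          (‖(star (hH.eigenvectorUnitary : Matrix ι ι ℂ) *ᵥ φ) j‖ ^ 2 : ℝ) := by
  set G := H - ((E : ℂ) • 1) with hGdef
  have hGherm : G.IsHermitian := by
    unfold Matrix.IsHermitian
    rw [hGdef, Matrix.conjTranspose_sub, hH.eq, Matrix.conjTranspose_smul,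
      Matrix.conjTranspose_one, Complex.star_def, Complex.conj_ofReal]
  have hpow : (G ^ k)ᴴ = G ^ k := hGherm.pow k
  have key : cinner (G ^ k *ᵥ φ) (G ^ k *ᵥ φ) = cinner φ (G ^ (2 * k) *ᵥ φ) := by
    rw [cinner_eq_dot, cinner_eq_dot, Matrix.star_mulVec, hpow,
      ← Matrix.dotProduct_mulVec, Matrix.mulVec_mulVec, ← pow_add, two_mul]
  have hrep : G ^ (2 * k) = (hH.eigenvectorUnitary : Matrix ι ι ℂ) *
      Matrix.diagonal ((fun j => ((hH.eigenvalues j - E : ℝ) : ℂ)) ^ (2 * k)) *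
      star (hH.eigenvectorUnitary : Matrix ι ι ℂ) := by
    rw [hGdef, G_diag hH E, conj_diag_pow hH]
  rw [← cinner_self_re, key, hrep, quadform hH φ]
  rw [Complex.re_sum]
  refine Finset.sum_congr rfl fun j _ => ?_
  have : ((fun j => ((hH.eigenvalues j - E : ℝ) : ℂ)) ^ (2 * k)) j
      = (((hH.eigenvalues j - E) ^ (2 * k) : ℝ) : ℂ) := by
    rw [Pi.pow_apply]
    push_cast
    ring
  rw [this, ← Complex.ofReal_mul]
  rw [Complex.ofReal_re]

end Spectral

/-! ### Projection form and Markov bound -/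

section Markov

variable {ι : Type*} [Fintype ι] [DecidableEq ι]

lemma proj_form {H : Matrix ι ι ℂ} (hH : H.IsHermitian) (φ : ι → ℂ) (E δ : ℝ) :
    (cinner φ (specProj H E δ *ᵥ φ)).re
      = ∑ j, (if |hH.eigenvalues j - E| ≤ δ then (1 : ℝ) else 0) *
          (‖(star (hH.eigenvectorUnitary : Matrix ι ι ℂ) *ᵥ φ) j‖ ^ 2 : ℝ) := by
  classical
  have hsp : specProj H E δ = (hH.eigenvectorUnitary : Matrix ι ι ℂ) *
      Matrix.diagonal (fun j => if |hH.eigenvalues j - E| ≤ δ then (1 : ℂ) else 0) *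
      star (hH.eigenvectorUnitary : Matrix ι ι ℂ) := by
    rw [specProj, dif_pos hH]
  rw [hsp, quadform hH φ, Complex.re_sum]
  refine Finset.sum_congr rfl fun j _ => ?_
  by_cases h : |hH.eigenvalues j - E| ≤ δ
  · rw [if_pos h, if_pos h, one_mul, one_mul, Complex.ofReal_re]
  · rw [if_neg h, if_neg h, zero_mul, zero_mul, Complex.zero_re]

lemma proj_nonneg {H : Matrix ι ι ℂ} (hH : H.IsHermitian) (φ : ι → ℂ) (E δ : ℝ) :
    0 ≤ (cinner φ (specProj H E δ *ᵥ φ)).re := by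
  rw [proj_form hH φ E δ]
  apply Finset.sum_nonneg
  intro j _
  apply mul_nonneg _ (sq_nonneg _)
  split <;> norm_num

lemma markov_bound {H : Matrix ι ι ℂ} (hH : H.IsHermitian) (φ : ι → ℂ)
    (hφ : cinner φ φ = 1) (E x : ℝ) (hx : 0 < x) (k : ℕ) {M : ℝ}
    (hm : evNorm ((H - ((E : ℂ) • 1)) ^ k *ᵥ φ) ≤ M) :
    1 - M ^ 2 / x ^ (2 * k) ≤ (cinner φ (specProj H E x *ᵥ φ)).re := by
  set w : ι → ℝ := fun j => (‖(star (hH.eigenvectorUnitary : Matrix ι ι ℂ) *ᵥ φ) j‖ ^ 2 : ℝ)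
    with hw
  have hw0 : ∀ j, 0 ≤ w j := fun j => sq_nonneg _
  have hsum : ∑ j, w j = 1 := sum_w_one hH φ hφ
  rw [proj_form hH φ E x]
  have key : ∀ j, (1 - if |hH.eigenvalues j - E| ≤ x then (1 : ℝ) else 0) * w j
      ≤ ((hH.eigenvalues j - E) / x) ^ (2 * k) * w j := by
    intro j
    by_cases h : |hH.eigenvalues j - E| ≤ x
    · rw [if_pos h, sub_self, zero_mul]
      apply mul_nonneg _ (hw0 j)
      rw [← Even.pow_abs (even_two_mul k)]
      positivity
    · rw [if_neg h, sub_zero, one_mul]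
      push_neg at h
      have h1 : (1 : ℝ) ≤ |(hH.eigenvalues j - E) / x| := by
        rw [abs_div, abs_of_pos hx, le_div_iff₀ hx, one_mul]
        exact le_of_lt h
      have h2 : (1 : ℝ) ≤ ((hH.eigenvalues j - E) / x) ^ (2 * k) := by
        rw [← Even.pow_abs (even_two_mul k)]
        calc (1 : ℝ) = 1 ^ (2 * k) := (one_pow _).symm
          _ ≤ |(hH.eigenvalues j - E) / x| ^ (2 * k) :=
            pow_le_pow_left₀ (by norm_num) h1 _
      nlinarith [hw0 j]
  have main : ∑ j, (1 - if |hH.eigenvalues j - E| ≤ x then (1 : ℝ) else 0) * w j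
      ≤ M ^ 2 / x ^ (2 * k) := by
    calc ∑ j, (1 - if |hH.eigenvalues j - E| ≤ x then (1 : ℝ) else 0) * w j
        ≤ ∑ j, ((hH.eigenvalues j - E) / x) ^ (2 * k) * w j :=
          Finset.sum_le_sum fun j _ => key j
      _ = (∑ j, (hH.eigenvalues j - E) ^ (2 * k) * w j) / x ^ (2 * k) := by
          rw [Finset.sum_div]
          refine Finset.sum_congr rfl fun j _ => ?_
          rw [div_pow]
          ring
      _ = evNorm ((H - ((E : ℂ) • 1)) ^ k *ᵥ φ) ^ 2 / x ^ (2 * k) := by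
          rw [moment_form hH φ E k]
      _ ≤ M ^ 2 / x ^ (2 * k) :=
          (div_le_div_iff_of_pos_right (pow_pos hx _)).mpr (pow_le_pow_left₀ (evNorm_nonneg _) hm 2)
  have expand : ∑ j, (1 - if |hH.eigenvalues j - E| ≤ x then (1 : ℝ) else 0) * w j
      = ∑ j, w j - ∑ j, (if |hH.eigenvalues j - E| ≤ x then (1 : ℝ) else 0) * w j := by
    rw [← Finset.sum_sub_distrib]
    refine Finset.sum_congr rfl fun j _ => ?_
    ring
  rw [expand, hsum] at main
  linarith

end Markov

/-! ### Final arithmetic facts -/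

lemma exp_aux : Real.exp (6 / 5) ≤ 9 := by
  have h1 : Real.exp (6 / 5) ≤ Real.exp 2 := Real.exp_le_exp.mpr (by norm_num)
  have h2 : Real.exp 2 < 9 := by
    have := Real.exp_one_lt_d9
    rw [show (2 : ℝ) = 1 + 1 by norm_num, Real.exp_add]
    nlinarith [Real.exp_pos 1]
  linarith

lemma inv_exp_aux : (1 / 9 : ℝ) ≤ Real.exp (-(6 / 5)) := by
  rw [Real.exp_neg]
  have h := exp_aux
  have hp := Real.exp_pos (6 / 5 : ℝ)
  rw [div_le_iff₀ (by norm_num : (0:ℝ) < 9)]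
  rw [inv_mul_eq_div, le_div_iff₀ hp]
  linarith

end Aux

open Aux

/-- The domain-wall state lies in an approximate microcanonical
ensemble of `H_XX` with energy `E = 2√(1-λ²)` and `Δ_a = 20`:
`⟨φ₀, P(E, x) φ₀⟩ ≥ 1 - O(e^{-x/20})` for all `x ≥ 0`. -/
theorem domain_wall_in_approximate_microcanonical :
    ∃ C : ℝ, 0 < C ∧
      ∀ n : ℕ, 1 ≤ n → ∀ lam : ℝ, 0 ≤ lam → lam ≤ 1 → ∀ x : ℝ, 0 ≤ x →
        1 - C * Real.exp (-x / 20) ≤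
          (cinner (dwState n)
            (specProj (xxH n lam) (2 * Real.sqrt (1 - lam ^ 2)) x *ᵥ dwState n)).re := by
  refine ⟨9, by norm_num, ?_⟩
  intro n hn lam hl0 hl1 x hx
  have hH := xxH_isHermitian n hn lam
  have hφ := dwState_cinner n
  by_cases hx24 : x < 24
  · have hnn := proj_nonneg hH (dwState n) (2 * Real.sqrt (1 - lam ^ 2)) x
    have h1 : Real.exp (-(6 / 5)) ≤ Real.exp (-x / 20) :=
      Real.exp_le_exp.mpr (by linarith)
    have h2 := inv_exp_aux
    linarith
  · push_neg at hx24
    have hx0 : (0 : ℝ) < x := by linarith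
    set k := ⌊x / 24⌋₊ with hk
    have hk1 : 1 ≤ k := Nat.le_floor (by rw [Nat.cast_one, le_div_iff₀ (by norm_num : (0:ℝ) < 24)]; linarith)
    have hkx : (k : ℝ) ≤ x / 24 := Nat.floor_le (by positivity)
    have hkx2 : x < 24 * ((k : ℝ) + 1) := by
      have := Nat.lt_floor_add_one (x / 24)
      rw [div_lt_iff₀ (by norm_num : (0:ℝ) < 24)] at this
      linarith
    have hm := moment_bound n hn lam hl0 hl1 k
    have hfact : ((Nat.factorial k : ℕ) : ℝ) ≤ (k : ℝ) ^ k := by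
      have := Nat.factorial_le_pow k
      calc ((Nat.factorial k : ℕ) : ℝ) ≤ ((k ^ k : ℕ) : ℝ) := Nat.cast_le.mpr this
        _ = (k : ℝ) ^ k := by push_cast; ring
    have hMle : (8 : ℝ) ^ k * (Nat.factorial k) ≤ (x / 3) ^ k := by
      calc (8 : ℝ) ^ k * (Nat.factorial k) ≤ (8 : ℝ) ^ k * (k : ℝ) ^ k := by
            apply mul_le_mul_of_nonneg_left hfact (by positivity)
        _ = (8 * (k : ℝ)) ^ k := by rw [mul_pow]
        _ ≤ (x / 3) ^ k := by
            apply pow_le_pow_left₀ (by positivity)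
            linarith
    have hmark := markov_bound hH (dwState n) hφ (2 * Real.sqrt (1 - lam ^ 2)) x hx0 k
      (hm.trans hMle)
    have hcalc : ((x / 3) ^ k) ^ 2 / x ^ (2 * k) = (1 / 9 : ℝ) ^ k := by
      have h1 : ((x / 3) / x) = (1 / 3 : ℝ) := by field_simp
      calc ((x / 3) ^ k) ^ 2 / x ^ (2 * k) = (x / 3) ^ (2 * k) / x ^ (2 * k) := by
            rw [← pow_mul, mul_comm k 2]
        _ = ((x / 3) / x) ^ (2 * k) := (div_pow _ _ _).symm
        _ = (1 / 3 : ℝ) ^ (2 * k) := by rw [h1]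
        _ = ((1 / 3 : ℝ) ^ 2) ^ k := by rw [← pow_mul]
        _ = (1 / 9 : ℝ) ^ k := by norm_num
    rw [hcalc] at hmark
    have hfin : (1 / 9 : ℝ) ^ k ≤ 9 * Real.exp (-x / 20) := by
      have ha := inv_exp_aux
      have e2 : (1 / 9 : ℝ) ^ k ≤ Real.exp ((k : ℝ) * (-(6 / 5))) := by
        rw [Real.exp_nat_mul]
        exact pow_le_pow_left₀ (by norm_num) ha k
      have e1 : Real.exp ((k : ℝ) * (-(6 / 5)) + (-(6 / 5))) ≤ Real.exp (-x / 20) :=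
        Real.exp_le_exp.mpr (by linarith)
      rw [Real.exp_add] at e1
      have hp1 := Real.exp_pos ((k : ℝ) * (-(6 / 5)))
      have hp2 := Real.exp_pos (-(6 / 5) : ℝ)
      nlinarith
    linarith
end
end
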